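/- arXiv:2302.00036 — 8 statements merged into one kernel-verified Lean document; each statement's English description precedes it below -/
import Mathlib

section
/- For any two policies π, π' and any state s ∈ S, the set Z = {γ ∈ [0,1) : v^π_{γ,s} = v^{π'}_{γ,s}} is either equal to the whole interval [0,1) or is a finite set. -/
/-!
By Cramer's rule, `v^π_{γ,s} = N(γ) / D(γ)` for polynomials `N` and `D(γ) = det (1 - γ P_π)`
(the reversed characteristic polynomial of `P_π`), and `D` has no root in `[0, 1)` because
`1 - γ P_π` is strictly diagonally dominant there. Hence on `[0, 1)` the values of `π` and `π'`
agree exactly at the roots of `N D' - N' D`, which is either the zero polynomial or has finitely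
many roots.
-/

open Matrix

/-- The transition matrix induced by a policy `π`. -/
def policyMatrix {S A : Type*} [Fintype S] (P : S → A → S → ℝ) (π : S → A) :
    Matrix S S ℝ :=
  Matrix.of fun s s' => P s (π s) s'

/-- The reward vector induced by a policy `π`. -/
def policyReward {S A : Type*} (r : S → A → ℝ) (π : S → A) : S → ℝ :=
  fun s => r s (π s)

/-- The discounted value function of a policy `π`: `v^π_γ = (I - γ P_π)⁻¹ r_π`. -/
noncomputable def valueFn {S A : Type*} [Fintype S] [DecidableEq S]
    (r : S → A → ℝ) (P : S → A → S → ℝ) (π : S → A) (γ : ℝ) : S → ℝ :=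
  ((1 : Matrix S S ℝ) - γ • policyMatrix P π)⁻¹ *ᵥ policyReward r π

open Polynomial

namespace Matrix

variable {n K : Type*} [Fintype n] [DecidableEq n]

theorem det_one_sub_smul_ne_zero [NormedField K] {Q : Matrix n n K}
    (hQ : ∀ k, ∑ j, ‖Q k j‖ ≤ 1) {γ : K} (hγ : ‖γ‖ < 1) :
    (1 - γ • Q).det ≠ 0 := by
  refine det_ne_zero_of_sum_row_lt_diag fun k => ?_
  have hoff : ∑ j ∈ Finset.univ.erase k, ‖(1 - γ • Q) k j‖
      = ‖γ‖ * ∑ j ∈ Finset.univ.erase k, ‖Q k j‖ := by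
    rw [Finset.mul_sum]
    refine Finset.sum_congr rfl fun j hj => ?_
    rw [sub_apply, one_apply_ne' (Finset.ne_of_mem_erase hj), zero_sub, norm_neg, smul_apply,
      smul_eq_mul, norm_mul]
  have hdiag : 1 - ‖γ‖ * ‖Q k k‖ ≤ ‖(1 - γ • Q) k k‖ := by
    rw [sub_apply, one_apply_eq, smul_apply, smul_eq_mul, ← norm_mul, ← norm_one (α := K)]
    exact norm_sub_norm_le _ _
  have hrow : ∑ j ∈ Finset.univ.erase k, ‖Q k j‖ ≤ 1 - ‖Q k k‖ := by
    rw [Finset.sum_erase_eq_sub (Finset.mem_univ k)]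
    linarith [hQ k]
  calc ∑ j ∈ Finset.univ.erase k, ‖(1 - γ • Q) k j‖
      ≤ ‖γ‖ * (1 - ‖Q k k‖) := hoff ▸ mul_le_mul_of_nonneg_left hrow (norm_nonneg γ)
    _ < 1 - ‖γ‖ * ‖Q k k‖ := by linarith
    _ ≤ ‖(1 - γ • Q) k k‖ := hdiag

variable [Field K]

theorem mapMatrix_evalRingHom_one_sub_X_smul (Q : Matrix n n K) (γ : K) :
    (evalRingHom γ).mapMatrix (1 - (X : K[X]) • Q.map C) = 1 - γ • Q := by
  ext i j
  simp [one_apply, apply_ite, mul_comm _ γ]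

theorem eval_charpolyRev_eq_det (Q : Matrix n n K) (γ : K) :
    Q.charpolyRev.eval γ = (1 - γ • Q).det := by
  rw [charpolyRev, ← coe_evalRingHom, RingHom.map_det, mapMatrix_evalRingHom_one_sub_X_smul]

-- Where `1 - γ • Q` is singular both sides are `0`: `Matrix.inv` and `0⁻¹` take that junk value.
theorem exists_inv_one_sub_smul_mulVec_eq_div (Q : Matrix n n K) (b : n → K) (i : n) :
    ∃ N : K[X], ∀ γ : K, ((1 - γ • Q)⁻¹ *ᵥ b) i = N.eval γ / Q.charpolyRev.eval γ := by
  refine ⟨((1 - (X : K[X]) • Q.map C).adjugate *ᵥ fun j => C (b j)) i, fun γ => ?_⟩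
  have hadj := (evalRingHom γ).map_adjugate (1 - (X : K[X]) • Q.map C)
  rw [mapMatrix_evalRingHom_one_sub_X_smul] at hadj
  rw [inv_def, Ring.inverse_eq_inv', smul_mulVec, eval_charpolyRev_eq_det, ← hadj]
  simp [mulVec, dotProduct, eval_finsetSum, div_eq_inv_mul]

end Matrix

theorem Polynomial.setOf_eval_div_eq_eq_or_finite {K : Type*} [Field K] {U : Set K}
    {N₁ D₁ N₂ D₂ : K[X]} (hD₁ : ∀ x ∈ U, D₁.eval x ≠ 0) (hD₂ : ∀ x ∈ U, D₂.eval x ≠ 0) :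
    {x | x ∈ U ∧ N₁.eval x / D₁.eval x = N₂.eval x / D₂.eval x} = U ∨
      {x | x ∈ U ∧ N₁.eval x / D₁.eval x = N₂.eval x / D₂.eval x}.Finite := by
  set p := N₁ * D₂ - N₂ * D₁
  have hiff : ∀ x ∈ U, N₁.eval x / D₁.eval x = N₂.eval x / D₂.eval x ↔ p.IsRoot x := by
    intro x hx
    rw [div_eq_div_iff (hD₁ x hx) (hD₂ x hx), IsRoot, eval_sub, eval_mul, eval_mul, sub_eq_zero]
  by_cases hp : p = 0
  · exact .inl <| Set.sep_eq_self_iff_mem_true.mpr fun x hx => (hiff x hx).mpr (by simp [hp])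
  · exact .inr <| (finite_setOfPred_isRoot hp).subset fun x hx => (hiff x hx.1).mp hx.2

theorem sum_norm_policyMatrix_apply {S A : Type*} [Fintype S] {P : S → A → S → ℝ}
    (hP0 : ∀ s a s', 0 ≤ P s a s') (hP1 : ∀ s a, ∑ s', P s a s' = 1) (π : S → A) (s : S) :
    ∑ s', ‖policyMatrix P π s s'‖ = 1 := by
  simp only [policyMatrix, of_apply, Real.norm_of_nonneg (hP0 _ _ _), hP1]

theorem valueFn_eq_set_eq_Ico_or_finite_general {S A : Type*} [Fintype S] [DecidableEq S]
    (r : S → A → ℝ) (P : S → A → S → ℝ)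
    (hP0 : ∀ s a s', 0 ≤ P s a s') (hP1 : ∀ s a, ∑ s', P s a s' = 1)
    (π π' : S → A) (s : S) :
    {γ : ℝ | γ ∈ Set.Ico (0 : ℝ) 1 ∧ valueFn r P π γ s = valueFn r P π' γ s}
        = Set.Ico (0 : ℝ) 1 ∨
      Set.Finite
        {γ : ℝ | γ ∈ Set.Ico (0 : ℝ) 1 ∧ valueFn r P π γ s = valueFn r P π' γ s} := by
  have hdet : ∀ σ : S → A, ∀ γ ∈ Set.Ico (0 : ℝ) 1, (policyMatrix P σ).charpolyRev.eval γ ≠ 0 :=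
    fun σ γ hγ => by
      rw [Matrix.eval_charpolyRev_eq_det]
      exact det_one_sub_smul_ne_zero (fun k => (sum_norm_policyMatrix_apply hP0 hP1 σ k).le)
        ((Real.norm_of_nonneg hγ.1).trans_lt hγ.2)
  obtain ⟨N, hN⟩ := exists_inv_one_sub_smul_mulVec_eq_div (policyMatrix P π) (policyReward r π) s
  obtain ⟨N', hN'⟩ :=
    exists_inv_one_sub_smul_mulVec_eq_div (policyMatrix P π') (policyReward r π') s
  simp only [valueFn, hN, hN']
  exact setOf_eval_div_eq_eq_or_finite (hdet π) (hdet π')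

/-- For any two policies `π, π'` and any state `s`, the set
`Z = {γ ∈ [0,1) : v^π_{γ,s} = v^{π'}_{γ,s}}` is either the whole interval `[0,1)`
or a finite set. -/
theorem valueFn_eq_set_eq_Ico_or_finite {S A : Type*} [Fintype S] [DecidableEq S]
    [Nonempty S] [Fintype A] [Nonempty A]
    (r : S → A → ℝ) (P : S → A → S → ℝ)
    (hP0 : ∀ s a s', 0 ≤ P s a s') (hP1 : ∀ s a, ∑ s', P s a s' = 1)
    (π π' : S → A) (s : S) :
    {γ : ℝ | γ ∈ Set.Ico (0 : ℝ) 1 ∧ valueFn r P π γ s = valueFn r P π' γ s}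
        = Set.Ico (0 : ℝ) 1 ∨
      Set.Finite
        {γ : ℝ | γ ∈ Set.Ico (0 : ℝ) 1 ∧ valueFn r P π γ s = valueFn r P π' γ s} :=
  valueFn_eq_set_eq_Ico_or_finite_general r P hP0 hP1 π π' s
end

section
/- Define f(γ) = 6γ − 8γ² and g(γ) = (8/3)γ − (16/9)γ². Then: (i) for every γ ∈ [0, 1/4], f(γ) ≤ 1 and g(γ) ≤ 1; (ii) for every γ ∈ (1/4, 1/2), f(γ) > 1; (iii) for every γ ∈ [0,1], g(γ) ≤ 1, with g(γ) = 1 if and only if γ = 3/4; (iv) f(3/4) < 1; and (v) for every γ ∈ (1/2, 1), f(γ) < 1 and (for γ ≠ 3/4) g(γ) < 1. (In the MDP of Example 3.1, 1, f(γ), g(γ) are the value functions at state 0 of actions a₁, a₂, a₃; hence a₁ is Blackwell-optimal with γ(a₁) = 1/2, a₁ is γ₁-discounted optimal for γ₁ ∈ [0,1/4] < γ(a₁), and a₃ is γ₂-discounted optimal for γ₂ = 3/4 > γ(a₁) but not Blackwell-optimal, proving Proposition 3.3.) -/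
/-- Value function of action `a₂` in Example 3.1: `f γ = 6γ - 8γ²`. -/
noncomputable def fEx (γ : ℝ) : ℝ := 6 * γ - 8 * γ ^ 2

/-- Value function of action `a₃` in Example 3.1: `g γ = (8/3)γ - (16/9)γ²`. -/
noncomputable def gEx (γ : ℝ) : ℝ := (8 / 3) * γ - (16 / 9) * γ ^ 2

/-! `1 - f` factors as `(4γ - 1)(2γ - 1)`, so `f` crosses `1` exactly at `1/4` and `1/2`,
while `1 - g = (4γ/3 - 1)²` is a perfect square vanishing only at `3/4`. -/

theorem one_sub_fEx (γ : ℝ) : 1 - fEx γ = (4 * γ - 1) * (2 * γ - 1) := by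
  unfold fEx; ring

theorem one_sub_gEx (γ : ℝ) : 1 - gEx γ = (4 / 3 * γ - 1) ^ 2 := by
  unfold gEx; ring

theorem fEx_le_one {γ : ℝ} (hγ : γ ≤ 1 / 4) : fEx γ ≤ 1 := by
  have : 0 ≤ (4 * γ - 1) * (2 * γ - 1) := mul_nonneg_of_nonpos_of_nonpos (by linarith) (by linarith)
  linarith [one_sub_fEx γ]

theorem one_lt_fEx {γ : ℝ} (h₁ : 1 / 4 < γ) (h₂ : γ < 1 / 2) : 1 < fEx γ := by
  have : (4 * γ - 1) * (2 * γ - 1) < 0 := mul_neg_of_pos_of_neg (by linarith) (by linarith)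
  linarith [one_sub_fEx γ]

theorem fEx_lt_one {γ : ℝ} (hγ : 1 / 2 < γ) : fEx γ < 1 := by
  have : 0 < (4 * γ - 1) * (2 * γ - 1) := mul_pos (by linarith) (by linarith)
  linarith [one_sub_fEx γ]

theorem gEx_le_one (γ : ℝ) : gEx γ ≤ 1 := by
  linarith [one_sub_gEx γ, sq_nonneg (4 / 3 * γ - 1)]

theorem gEx_eq_one_iff {γ : ℝ} : gEx γ = 1 ↔ γ = 3 / 4 := by
  have key : gEx γ = 1 ↔ 4 / 3 * γ - 1 = 0 := by
    rw [← sq_eq_zero_iff, ← one_sub_gEx, sub_eq_zero, eq_comm]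
  rw [key]
  constructor <;> intro h <;> linarith

theorem gEx_lt_one {γ : ℝ} (hγ : γ ≠ 3 / 4) : gEx γ < 1 :=
  (gEx_le_one γ).lt_of_ne (mt gEx_eq_one_iff.mp hγ)

/-- Properties of the value functions of Example 3.1, proving Proposition 3.3:
(i) on `[0, 1/4]`, `f ≤ 1` and `g ≤ 1`; (ii) on `(1/4, 1/2)`, `f > 1`;
(iii) on `[0,1]`, `g ≤ 1` with equality iff `γ = 3/4`; (iv) `f(3/4) < 1`;
(v) on `(1/2, 1)`, `f < 1`, and `g < 1` away from `γ = 3/4`. -/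
theorem example_counter_example_0 :
    (∀ γ : ℝ, 0 ≤ γ → γ ≤ 1 / 4 → fEx γ ≤ 1 ∧ gEx γ ≤ 1) ∧
    (∀ γ : ℝ, 1 / 4 < γ → γ < 1 / 2 → 1 < fEx γ) ∧
    (∀ γ : ℝ, 0 ≤ γ → γ ≤ 1 → gEx γ ≤ 1 ∧ (gEx γ = 1 ↔ γ = 3 / 4)) ∧
    fEx (3 / 4) < 1 ∧
    (∀ γ : ℝ, 1 / 2 < γ → γ < 1 → fEx γ < 1 ∧ (γ ≠ 3 / 4 → gEx γ < 1)) :=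
  ⟨fun γ _ hγ => ⟨fEx_le_one hγ, gEx_le_one γ⟩,
    fun _ h₁ h₂ => one_lt_fEx h₁ h₂,
    fun γ _ _ => ⟨gEx_le_one γ, gEx_eq_one_iff⟩,
    fEx_lt_one (by norm_num),
    fun _ hγ _ => ⟨fEx_lt_one hγ, gEx_lt_one⟩⟩
end

section
/- Let n ≥ 1 and m ≥ 1 be integers and let P be an n × n row-stochastic real matrix such that m·P(i,j) ∈ ℕ for all i, j. Consider the polynomial D(X) = det(I − X·P) (the determinant of the matrix I − X·P with polynomial entries). Then D has degree at most n, the polynomial m^n·D has integer coefficients, the absolute value of the coefficient of X^k in m^n·D is at most m^n·C(n,k) (where C(n,k) is the binomial coefficient), and the sum of the absolute values of the coefficients of m^n·D is at most m^n·2^n. -/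
open Polynomial

/-!
Clearing denominators, `m ^ n • det (1 - X • P) = det (m • 1 - X • (m • P))` is the determinant
of a matrix of integer polynomials. For the coefficient bounds, write `1 - X • P = A - B` with
`A = 1` and `B = X • P`, both with nonnegative coefficients: expanding the determinant over
permutations, every coefficient is dominated in absolute value by the corresponding coefficient
of the permanent of `A + B`, which by nonnegativity is at most that of the product of its row sums
`∏ i, (1 + X * ∑ j, P i j) = (1 + X) ^ n`.
-/

/-- The characteristic-like polynomial `D(X) = det (I - X • P)` of a matrix `P`,
computed in the polynomial ring `ℝ[X]`. -/
noncomputable def detOneSubXSmul {n : ℕ} (P : Matrix (Fin n) (Fin n) ℝ) : Polynomial ℝ :=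
  Matrix.det ((1 : Matrix (Fin n) (Fin n) ℝ[X]) - (X : ℝ[X]) • P.map C)

namespace Polynomial

variable {R : Type*} [CommRing R] [LinearOrder R] [IsStrictOrderedRing R]

theorem abs_coeff_mul_le {p q p' q' : R[X]} (h : ∀ j, |p.coeff j| ≤ q.coeff j)
    (h' : ∀ j, |p'.coeff j| ≤ q'.coeff j) (k : ℕ) : |(p * p').coeff k| ≤ (q * q').coeff k := by
  rw [coeff_mul, coeff_mul]
  refine (Finset.abs_sum_le_sum_abs _ _).trans (Finset.sum_le_sum fun x _ => ?_)
  rw [abs_mul]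
  exact mul_le_mul (h _) (h' _) (abs_nonneg _) ((abs_nonneg _).trans (h _))

theorem abs_coeff_prod_le {ι : Type*} (s : Finset ι) {p q : ι → R[X]}
    (h : ∀ i ∈ s, ∀ j, |(p i).coeff j| ≤ (q i).coeff j) (k : ℕ) :
    |(∏ i ∈ s, p i).coeff k| ≤ (∏ i ∈ s, q i).coeff k := by
  induction s using Finset.cons_induction generalizing k with
  | empty =>
    rw [Finset.prod_empty, Finset.prod_empty, coeff_one]
    split <;> simp
  | cons a s ha ih =>
    rw [Finset.prod_cons, Finset.prod_cons]
    exact abs_coeff_mul_le (h a (Finset.mem_cons_self a s))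
      (ih fun i hi => h i (Finset.mem_cons_of_mem hi)) k

theorem coeff_prod_nonneg {ι : Type*} (s : Finset ι) {q : ι → R[X]}
    (h : ∀ i ∈ s, ∀ j, 0 ≤ (q i).coeff j) (k : ℕ) : 0 ≤ (∏ i ∈ s, q i).coeff k :=
  (abs_nonneg _).trans (abs_coeff_prod_le s (fun i hi j => (abs_of_nonneg (h i hi j)).le) k)

theorem abs_coeff_sub_le_coeff_add {p q : R[X]} (hp : ∀ j, 0 ≤ p.coeff j)
    (hq : ∀ j, 0 ≤ q.coeff j) (k : ℕ) : |(p - q).coeff k| ≤ (p + q).coeff k := by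
  rw [coeff_sub, coeff_add]
  calc |p.coeff k - q.coeff k| ≤ |p.coeff k| + |q.coeff k| := abs_sub _ _
    _ = p.coeff k + q.coeff k := by rw [abs_of_nonneg (hp k), abs_of_nonneg (hq k)]

theorem sum_abs_coeff_le_sum_range {p : R[X]} {n : ℕ} (hp : p.natDegree ≤ n) {b : ℕ → R}
    (hb : ∀ k, |p.coeff k| ≤ b k) :
    ∑ k ∈ p.support, |p.coeff k| ≤ ∑ k ∈ Finset.range (n + 1), b k := by
  have hsum := p.sum_over_range' (f := fun _ a => |a|) (fun _ => abs_zero) (n + 1)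
    (Nat.lt_succ_of_le hp)
  rw [Polynomial.sum_def] at hsum
  rw [hsum]
  exact Finset.sum_le_sum fun k _ => hb k

end Polynomial

namespace Matrix

variable {n : Type*} [Fintype n] [DecidableEq n]

theorem det_mem_lifts {R S : Type*} [CommRing R] [CommRing S] (f : S →+* R)
    {M : Matrix n n R[X]} (hM : ∀ i j, M i j ∈ lifts f) : M.det ∈ lifts f := by
  choose N hN using fun i j => (mem_lifts _).1 (hM i j)
  have hMN : M = (mapRingHom f).mapMatrix (of N) := ext fun i j => (hN i j).symm
  rw [hMN, ← RingHom.map_det]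
  exact (mem_lifts _).2 ⟨_, rfl⟩

variable {R : Type*} [CommRing R]

theorem natDegree_charpolyRev_le (M : Matrix n n R) :
    M.charpolyRev.natDegree ≤ Fintype.card n := by
  simpa [charpolyRev, sub_eq_neg_add, Matrix.map_neg] using natDegree_det_X_add_C_le (-M) 1

theorem C_pow_mul_charpolyRev_mem_lifts {P : Matrix n n R} {m : ℤ}
    (h : ∀ i j, ∃ k : ℤ, m * P i j = k) :
    C ((m : R) ^ Fintype.card n) * P.charpolyRev ∈ lifts (Int.castRingHom R) := by
  rw [map_pow, charpolyRev, ← det_smul]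
  refine det_mem_lifts _ fun i j => (lifts_iff_liftsRing _ _).2 ?_
  obtain ⟨k, hk⟩ := h i j
  have hentry : (C (m : R) • (1 - (X : R[X]) • P.map C)) i j
      = C (Int.castRingHom R (m * (1 : Matrix n n ℤ) i j)) - X * C (Int.castRingHom R k) := by
    simp only [smul_apply, sub_apply, one_apply, map_apply, smul_eq_mul, eq_intCast,
      Int.cast_ite, Int.cast_one, Int.cast_zero, ← hk, map_mul]
    split_ifs <;> simp only [map_one, map_zero] <;> ring
  rw [hentry]
  exact sub_mem ((lifts_iff_liftsRing _ _).1 (C_mem_lifts _ _))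
    (mul_mem ((lifts_iff_liftsRing _ _).1 (X_mem_lifts _))
      ((lifts_iff_liftsRing _ _).1 (C_mem_lifts _ _)))

variable [LinearOrder R] [IsStrictOrderedRing R]

theorem abs_coeff_det_le_coeff_permanent {M Q : Matrix n n R[X]}
    (h : ∀ i j k, |(M i j).coeff k| ≤ (Q i j).coeff k) (k : ℕ) :
    |M.det.coeff k| ≤ Q.permanent.coeff k := by
  rw [det_apply, permanent, finsetSum_coeff, finsetSum_coeff]
  refine (Finset.abs_sum_le_sum_abs _ _).trans (Finset.sum_le_sum fun σ _ => ?_)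
  have hprod := abs_coeff_prod_le Finset.univ (fun i _ j => h (σ i) i j) k
  rcases Int.units_eq_one_or (Equiv.Perm.sign σ) with hσ | hσ <;> simpa [hσ] using hprod

theorem coeff_permanent_le_coeff_prod_sum {Q : Matrix n n R[X]}
    (h : ∀ i j k, 0 ≤ (Q i j).coeff k) (k : ℕ) :
    Q.permanent.coeff k ≤ (∏ i, ∑ j, Q i j).coeff k := by
  rw [← permanent_transpose, permanent]
  simp only [transpose_apply]
  rw [Fintype.prod_sum fun i j => Q i j, finsetSum_coeff, finsetSum_coeff]
  let toFun : Equiv.Perm n ↪ (n → n) := ⟨(⇑), Equiv.coe_fn_injective⟩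
  calc ∑ σ : Equiv.Perm n, (∏ i, Q i (σ i)).coeff k
      = ∑ f ∈ Finset.univ.map toFun, (∏ i, Q i (f i)).coeff k := by rw [Finset.sum_map]; rfl
    _ ≤ ∑ f : n → n, (∏ i, Q i (f i)).coeff k :=
        Finset.sum_le_sum_of_subset_of_nonneg (Finset.subset_univ _)
          fun f _ _ => coeff_prod_nonneg _ (fun i _ => h i (f i)) k

theorem abs_coeff_det_sub_le {A B : Matrix n n R[X]} (hA : ∀ i j k, 0 ≤ (A i j).coeff k)
    (hB : ∀ i j k, 0 ≤ (B i j).coeff k) (k : ℕ) :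
    |(A - B).det.coeff k| ≤ (∏ i, ∑ j, (A + B) i j).coeff k :=
  (abs_coeff_det_le_coeff_permanent
      (fun i j => abs_coeff_sub_le_coeff_add (hA i j) (hB i j)) k).trans
    (coeff_permanent_le_coeff_prod_sum (fun i j l => add_nonneg (hA i j l) (hB i j l)) k)

theorem abs_coeff_charpolyRev_le_choose {P : Matrix n n R} (hP : ∀ i j, 0 ≤ P i j)
    (hrow : ∀ i, ∑ j, P i j = 1) (k : ℕ) :
    |P.charpolyRev.coeff k| ≤ (Fintype.card n).choose k := by
  have hrowsum : ∀ i, ∑ j, (1 + (X : R[X]) • P.map C) i j = 1 + X := fun i => by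
    simp [Finset.sum_add_distrib, one_apply, ← Finset.sum_mul, ← map_sum, hrow i]
  have hbound := abs_coeff_det_sub_le (A := 1) (B := (X : R[X]) • P.map C)
    (fun i j l => by rw [one_apply]; split_ifs <;> simp [coeff_one, apply_ite])
    (fun i j l => by simp [coeff_X, apply_ite, hP]) k
  rwa [Finset.prod_congr rfl fun i _ => hrowsum i, Finset.prod_const, Finset.card_univ,
    coeff_one_add_X_pow] at hbound

end Matrix

theorem det_one_sub_X_smul_stochastic_bounds_general
    (n m : ℕ)
    (P : Matrix (Fin n) (Fin n) ℝ)
    (hnonneg : ∀ i j, 0 ≤ P i j) (hrow : ∀ i, ∑ j, P i j = 1)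
    (hrat : ∀ i j, ∃ k : ℕ, (m : ℝ) * P i j = k) :
    (detOneSubXSmul P).natDegree ≤ n ∧
    (∀ k : ℕ, ∃ z : ℤ, ((m : ℝ) ^ n * (detOneSubXSmul P).coeff k) = z) ∧
    (∀ k : ℕ, |(m : ℝ) ^ n * (detOneSubXSmul P).coeff k| ≤ (m : ℝ) ^ n * n.choose k) ∧
    (∑ k ∈ (C ((m : ℝ) ^ n) * detOneSubXSmul P).support,
        |(C ((m : ℝ) ^ n) * detOneSubXSmul P).coeff k| ≤ (m : ℝ) ^ n * 2 ^ n) := by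
  rw [show detOneSubXSmul P = P.charpolyRev from rfl]
  have hdeg : P.charpolyRev.natDegree ≤ n := by
    simpa using P.natDegree_charpolyRev_le
  have hcoeff (k : ℕ) : |(m : ℝ) ^ n * P.charpolyRev.coeff k| ≤ (m : ℝ) ^ n * n.choose k := by
    rw [abs_mul, abs_of_nonneg (by positivity)]
    gcongr
    simpa using Matrix.abs_coeff_charpolyRev_le_choose hnonneg hrow k
  refine ⟨hdeg, fun k => ?_, hcoeff, ?_⟩
  · have hint := Matrix.C_pow_mul_charpolyRev_mem_lifts (P := P) (m := m) fun i j =>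
      let ⟨k, hk⟩ := hrat i j; ⟨k, by exact_mod_cast hk⟩
    obtain ⟨z, hz⟩ := (lifts_iff_coeff_lifts _).1 hint k
    rw [Fintype.card_fin, Int.cast_natCast, coeff_C_mul, eq_intCast] at hz
    exact ⟨z, hz.symm⟩
  · calc _ ≤ ∑ k ∈ Finset.range (n + 1), (m : ℝ) ^ n * n.choose k :=
          sum_abs_coeff_le_sum_range ((natDegree_C_mul_le _ _).trans hdeg)
            fun k => by simpa only [coeff_C_mul] using hcoeff k
      _ = (m : ℝ) ^ n * 2 ^ n := by
          rw [← Finset.mul_sum]; exact_mod_cast congrArg _ (Nat.sum_range_choose n)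

/-- If `P` is an `n × n` row-stochastic matrix with `m • P` having natural-number entries,
then `D(X) = det (I - X • P)` has degree at most `n`, `m^n • D` has integer coefficients,
the `k`-th coefficient of `m^n • D` is at most `m^n * C(n,k)` in absolute value, and the sum
of absolute values of the coefficients of `m^n • D` is at most `m^n * 2^n`. -/
theorem det_one_sub_X_smul_stochastic_bounds
    (n m : ℕ) (hn : 1 ≤ n) (hm : 1 ≤ m)
    (P : Matrix (Fin n) (Fin n) ℝ)
    (hnonneg : ∀ i j, 0 ≤ P i j) (hrow : ∀ i, ∑ j, P i j = 1)
    (hrat : ∀ i j, ∃ k : ℕ, (m : ℝ) * P i j = k) :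
    (detOneSubXSmul P).natDegree ≤ n ∧
    (∀ k : ℕ, ∃ z : ℤ, ((m : ℝ) ^ n * (detOneSubXSmul P).coeff k) = z) ∧
    (∀ k : ℕ, |(m : ℝ) ^ n * (detOneSubXSmul P).coeff k| ≤ (m : ℝ) ^ n * n.choose k) ∧
    (∑ k ∈ (C ((m : ℝ) ^ n) * detOneSubXSmul P).support,
        |(C ((m : ℝ) ^ n) * detOneSubXSmul P).coeff k| ≤ (m : ℝ) ^ n * 2 ^ n) :=
  det_one_sub_X_smul_stochastic_bounds_general n m P hnonneg hrow hrat
end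

section
/- Let n ≥ 1, m ≥ 1, r∞ ∈ ℕ, let P be an n × n row-stochastic real matrix with m·P(i,j) ∈ ℕ for all i, j, and let r ∈ ℝ^n be a vector such that for each i, r_i = q_i/m for some q_i ∈ ℤ with |q_i| ≤ r∞. Fix an index s and let N_s(X) be the determinant of the matrix obtained from I − X·P by replacing its s-th column with r. Then N_s has degree at most n − 1, the polynomial m^n·N_s has integer coefficients, the absolute value of the coefficient of X^k in m^n·N_s is at most 2·m^n·n·r∞·C(n−1,k), and the sum of the absolute values of the coefficients of m^n·N_s is at most m^n·n·r∞·2^n. -/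
/-!
Expand the determinant over permutations `σ`. Column `s` contributes the constant `r (σ⁻¹ s)`,
every other row `i` the factor `δ i (σ i) - X * P i (σ i)`, so the coefficient of `X ^ k` is a
signed sum over the `k`-sets `T` of rows other than `σ⁻¹ s`, where `σ` must fix the rows outside
`T`. Once `σ⁻¹ s` and `T` are fixed, such a `σ` is determined by its restriction to `T`, so these
terms add up to at most `∏ i ∈ T, ∑ j, P i j ≤ 1`. Hence
`|coeff k N_s| ≤ (∑ i, |r i|) * C(n - 1, k)`, which also bounds the degree. For integrality,
multiplying every entry by `m` turns the matrix into one over `ℤ[X]` and its determinant into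
`m ^ n * N_s`.
-/

open Polynomial

/-- The polynomial `N_s(X)`: the determinant of the matrix obtained from `I - X • P`
(in `ℝ[X]`) by replacing its `s`-th column with the (constant) vector `r`. -/
noncomputable def detOneSubXSmulUpdateCol {n : ℕ} (P : Matrix (Fin n) (Fin n) ℝ)
    (r : Fin n → ℝ) (s : Fin n) : Polynomial ℝ :=
  Matrix.det
    (Matrix.updateCol ((1 : Matrix (Fin n) (Fin n) ℝ[X]) - (X : ℝ[X]) • P.map C) s
      fun i => C (r i))

open Finset

theorem sum_prod_le_one_of_injOn {R α ι κ : Type*} [CommSemiring R] [PartialOrder R]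
    [IsOrderedRing R] [Fintype κ] (P : ι → κ → R) (hP : ∀ i j, 0 ≤ P i j)
    (hrow : ∀ i, ∑ j, P i j ≤ 1) (T : Finset ι) (S : Finset α) (f : α → ι → κ)
    (hf : Set.InjOn (fun a (i : T) => f a i) S) :
    ∑ a ∈ S, ∏ i ∈ T, P i (f a i) ≤ 1 := by
  classical
  calc ∑ a ∈ S, ∏ i ∈ T, P i (f a i)
      = ∑ g ∈ S.image (fun a (i : T) => f a i), ∏ i : T, P i (g i) := by
        rw [sum_image hf]; simp only [prod_coe_sort T fun i => P i _]
    _ ≤ ∑ g : T → κ, ∏ i : T, P i (g i) :=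
        sum_le_sum_of_subset_of_nonneg (subset_univ _) fun _ _ _ => prod_nonneg fun _ _ => hP _ _
    _ = ∏ i : T, ∑ j, P i j := (Fintype.prod_sum _).symm
    _ ≤ 1 := prod_le_one (fun _ _ => sum_nonneg fun _ _ => hP _ _) fun i _ => hrow i

namespace Polynomial

theorem coeff_prod_C_add_C_mul_X {R ι : Type*} [CommSemiring R] [DecidableEq ι]
    (t : Finset ι) (a b : ι → R) (k : ℕ) :
    (∏ i ∈ t, (C (a i) + C (b i) * X)).coeff k =
      ∑ T ∈ t.powersetCard k, (∏ i ∈ T, b i) * ∏ i ∈ t \ T, a i := by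
  have hterm (T : Finset ι) : ((∏ i ∈ T, C (b i) * X) * ∏ i ∈ t \ T, C (a i)).coeff k =
      if T.card = k then (∏ i ∈ T, b i) * ∏ i ∈ t \ T, a i else 0 := by
    rw [prod_mul_distrib, prod_const, ← map_prod, ← map_prod, mul_right_comm, ← map_mul,
      coeff_C_mul_X_pow]
    simp [eq_comm]
  simp_rw [add_comm (C _), prod_add, finsetSum_coeff, hterm, powersetCard_eq_filter, sum_filter]

variable {p : ℝ[X]} {c : ℝ} {d : ℕ}

theorem natDegree_le_of_abs_coeff_le_mul_choose (hp : ∀ k, |p.coeff k| ≤ c * d.choose k) :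
    p.natDegree ≤ d :=
  natDegree_le_iff_coeff_eq_zero.mpr fun k hk =>
    abs_nonpos_iff.mp <| by simpa [Nat.choose_eq_zero_of_lt hk] using hp k

theorem sum_abs_coeff_le_of_abs_coeff_le_mul_choose (hp : ∀ k, |p.coeff k| ≤ c * d.choose k) :
    ∑ k ∈ p.support, |p.coeff k| ≤ c * 2 ^ d := by
  have hsupp : p.support ⊆ range (d + 1) := supp_subset_range_natDegree_succ.trans <|
    range_subset_range.mpr (by have := natDegree_le_of_abs_coeff_le_mul_choose hp; omega)
  calc ∑ k ∈ p.support, |p.coeff k| ≤ ∑ k ∈ range (d + 1), |p.coeff k| :=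
        sum_le_sum_of_subset_of_nonneg hsupp fun _ _ _ => abs_nonneg _
    _ ≤ ∑ k ∈ range (d + 1), c * d.choose k := sum_le_sum fun k _ => hp k
    _ = c * 2 ^ d := by
        rw [← mul_sum]
        exact congrArg (c * ·) (by exact_mod_cast Nat.sum_range_choose d)

end Polynomial

namespace Matrix

theorem det_mem_range_of_forall_mem_range {n R S : Type*} [Fintype n] [DecidableEq n]
    [CommRing R] [CommRing S] {f : R →+* S} {M : Matrix n n S} (h : ∀ i j, M i j ∈ f.range) :
    M.det ∈ f.range := by
  choose N hN using h
  exact ⟨(Matrix.of N).det, by rw [RingHom.map_det]; congr; ext i j; exact hN i j⟩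

variable {ι : Type*} [DecidableEq ι]

noncomputable def oneSubXSmulUpdateCol (P : Matrix ι ι ℝ) (r : ι → ℝ) (s : ι) :
    Matrix ι ι ℝ[X] :=
  updateCol (1 - (X : ℝ[X]) • P.map C) s fun i => C (r i)

variable (P : Matrix ι ι ℝ) (r : ι → ℝ) (s : ι)

theorem oneSubXSmulUpdateCol_apply_of_ne {i j : ι} (hj : j ≠ s) :
    oneSubXSmulUpdateCol P r s i j = C ((1 : Matrix ι ι ℝ) i j) + C (-P i j) * X := by
  rw [oneSubXSmulUpdateCol, updateCol_ne hj, sub_apply, smul_apply, map_apply, smul_eq_mul,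
    one_apply, one_apply, apply_ite C, map_one, map_zero, map_neg]
  ring

variable [Fintype ι]

theorem prod_oneSubXSmulUpdateCol_apply_perm {σ : Equiv.Perm ι} {i₀ : ι} (hσ : σ i₀ = s) :
    ∏ i, oneSubXSmulUpdateCol P r s i (σ i) =
      C (r i₀) * ∏ i ∈ univ.erase i₀, (C ((1 : Matrix ι ι ℝ) i (σ i)) + C (-P i (σ i)) * X) := by
  rw [← mul_prod_erase univ _ (mem_univ i₀), hσ, oneSubXSmulUpdateCol, updateCol_self]
  refine congrArg _ (prod_congr rfl fun i hi => oneSubXSmulUpdateCol_apply_of_ne P r s ?_)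
  rw [← hσ]
  exact σ.injective.ne (ne_of_mem_erase hi)

theorem abs_coeff_prod_oneSubXSmulUpdateCol_apply_perm_le (hP : ∀ i j, 0 ≤ P i j)
    {σ : Equiv.Perm ι} {i₀ : ι} (hσ : σ i₀ = s) (k : ℕ) :
    |(∏ i, oneSubXSmulUpdateCol P r s i (σ i)).coeff k| ≤ |r i₀| *
      ∑ T ∈ (univ.erase i₀).powersetCard k,
        if ∀ i ∈ univ.erase i₀ \ T, i = σ i then ∏ i ∈ T, P i (σ i) else 0 := by
  rw [prod_oneSubXSmulUpdateCol_apply_perm P r s hσ, coeff_C_mul, coeff_prod_C_add_C_mul_X,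
    abs_mul]
  refine mul_le_mul_of_nonneg_left ((abs_sum_le_sum_abs _ _).trans (sum_le_sum fun T _ => ?_))
    (abs_nonneg _)
  simp only [one_apply, prod_boole, abs_mul, abs_prod, abs_neg, abs_of_nonneg (hP _ _)]
  split_ifs <;> simp

theorem sum_abs_coeff_prod_oneSubXSmulUpdateCol_apply_perm_le (hP : ∀ i j, 0 ≤ P i j)
    (hrow : ∀ i, ∑ j, P i j ≤ 1) (i₀ : ι) (k : ℕ) :
    ∑ σ ∈ univ.filter (fun σ : Equiv.Perm ι => σ.symm s = i₀),
      |(∏ i, oneSubXSmulUpdateCol P r s i (σ i)).coeff k| ≤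
      |r i₀| * (Fintype.card ι - 1).choose k := by
  set F := univ.filter fun σ : Equiv.Perm ι => σ.symm s = i₀
  have hF {σ : Equiv.Perm ι} (hσ : σ ∈ F) : σ i₀ = s :=
    ((Equiv.symm_apply_eq σ).mp (mem_filter.mp hσ).2).symm
  have hsumT (T) (_ : T ∈ (univ.erase i₀).powersetCard k) :
      ∑ σ ∈ F, (if ∀ i ∈ univ.erase i₀ \ T, i = σ i then ∏ i ∈ T, P i (σ i) else 0) ≤ 1 := by
    rw [← sum_filter]
    refine sum_prod_le_one_of_injOn P hP hrow T _ (⇑) fun σ hσ τ hτ hστ => Equiv.ext fun i => ?_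
    simp only [coe_filter, Set.mem_ofPred_eq] at hσ hτ
    by_cases hiT : i ∈ T
    · exact congrFun hστ ⟨i, hiT⟩
    by_cases hi : i = i₀
    · rw [hi, hF hσ.1, hF hτ.1]
    · have hiD : i ∈ univ.erase i₀ \ T := by simp [hi, hiT]
      rw [← hσ.2 i hiD, ← hτ.2 i hiD]
  calc _ ≤ ∑ σ ∈ F, |r i₀| * ∑ T ∈ (univ.erase i₀).powersetCard k,
          if ∀ i ∈ univ.erase i₀ \ T, i = σ i then ∏ i ∈ T, P i (σ i) else 0 :=
        sum_le_sum fun σ hσ => abs_coeff_prod_oneSubXSmulUpdateCol_apply_perm_le P r s hP (hF hσ) k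
    _ ≤ |r i₀| * ∑ T ∈ (univ.erase i₀).powersetCard k, 1 := by
        rw [← mul_sum, sum_comm]
        exact mul_le_mul_of_nonneg_left (sum_le_sum hsumT) (abs_nonneg _)
    _ = |r i₀| * (Fintype.card ι - 1).choose k := by
        simp [card_erase_of_mem]

theorem abs_coeff_det_oneSubXSmulUpdateCol_le (hP : ∀ i j, 0 ≤ P i j)
    (hrow : ∀ i, ∑ j, P i j ≤ 1) (k : ℕ) :
    |(oneSubXSmulUpdateCol P r s).det.coeff k| ≤
      (∑ i, |r i|) * (Fintype.card ι - 1).choose k := by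
  rw [← det_transpose, det_apply', finsetSum_coeff, sum_mul]
  calc _ ≤ ∑ σ : Equiv.Perm ι, |(∏ i, oneSubXSmulUpdateCol P r s i (σ i)).coeff k| := by
        refine (abs_sum_le_sum_abs _ _).trans (sum_le_sum fun σ _ => ?_)
        rcases Int.units_eq_one_or (Equiv.Perm.sign σ) with h | h <;> simp [h]
    _ = ∑ i₀, ∑ σ ∈ univ.filter (fun σ : Equiv.Perm ι => σ.symm s = i₀),
          |(∏ i, oneSubXSmulUpdateCol P r s i (σ i)).coeff k| := (sum_fiberwise _ _ _).symm
    _ ≤ _ := sum_le_sum fun i₀ _ =>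
        sum_abs_coeff_prod_oneSubXSmulUpdateCol_apply_perm_le P r s hP hrow i₀ k

theorem abs_coeff_det_oneSubXSmulUpdateCol_le_of_abs_le (hP : ∀ i j, 0 ≤ P i j)
    (hrow : ∀ i, ∑ j, P i j ≤ 1) {ρ : ℝ} (hr : ∀ i, |r i| ≤ ρ) (k : ℕ) :
    |(oneSubXSmulUpdateCol P r s).det.coeff k| ≤
      Fintype.card ι * ρ * (Fintype.card ι - 1).choose k := by
  refine (abs_coeff_det_oneSubXSmulUpdateCol_le P r s hP hrow k).trans ?_
  gcongr
  simpa using sum_le_sum fun i (_ : i ∈ univ) => hr i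

theorem C_pow_mul_det_oneSubXSmulUpdateCol_mem_range {c : ℤ}
    (hP : ∀ i j, ∃ z : ℤ, c * P i j = z) (hr : ∀ i, ∃ z : ℤ, c * r i = z) :
    C ((c : ℝ) ^ Fintype.card ι) * (oneSubXSmulUpdateCol P r s).det ∈
      (mapRingHom (Int.castRingHom ℝ)).range := by
  have hC (z : ℤ) : C (z : ℝ) ∈ (mapRingHom (Int.castRingHom ℝ)).range := ⟨C z, by simp⟩
  have hX : X ∈ (mapRingHom (Int.castRingHom ℝ)).range := ⟨X, by simp⟩
  rw [map_pow, ← det_smul]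
  refine det_mem_range_of_forall_mem_range fun i j => ?_
  rw [smul_apply, smul_eq_mul]
  by_cases hj : j = s
  · obtain ⟨z, hz⟩ := hr i
    rw [hj, oneSubXSmulUpdateCol, updateCol_self, ← map_mul, hz]
    exact hC z
  · obtain ⟨z, hz⟩ := hP i j
    have hentry : C (c : ℝ) * (C ((1 : Matrix ι ι ℝ) i j) + C (-P i j) * X) =
        C (c : ℝ) * C ((1 : Matrix ι ι ℝ) i j) - C (z : ℝ) * X := by
      rw [← hz, map_neg, map_mul]
      ring
    rw [oneSubXSmulUpdateCol_apply_of_ne P r s hj, hentry]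
    refine sub_mem (mul_mem (hC c) ?_) (mul_mem (hC z) hX)
    rw [one_apply]
    split_ifs <;> simp

theorem exists_intCast_eq_pow_mul_coeff_det_oneSubXSmulUpdateCol {c : ℤ}
    (hP : ∀ i j, ∃ z : ℤ, c * P i j = z) (hr : ∀ i, ∃ z : ℤ, c * r i = z) (k : ℕ) :
    ∃ z : ℤ, (c : ℝ) ^ Fintype.card ι * (oneSubXSmulUpdateCol P r s).det.coeff k = z := by
  obtain ⟨p, hp⟩ := C_pow_mul_det_oneSubXSmulUpdateCol_mem_range P r s hP hr
  exact ⟨p.coeff k, by rw [← coeff_C_mul, ← hp, coe_mapRingHom, coeff_map, eq_intCast]⟩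

end Matrix

theorem detOneSubXSmulUpdateCol_eq_det {n : ℕ} (P : Matrix (Fin n) (Fin n) ℝ) (r : Fin n → ℝ)
    (s : Fin n) : detOneSubXSmulUpdateCol P r s = (P.oneSubXSmulUpdateCol r s).det :=
  rfl

theorem det_one_sub_X_smul_updateColumn_bounds_general
    (n m : ℕ) (rinf : ℕ) (hm : 1 ≤ m)
    (P : Matrix (Fin n) (Fin n) ℝ)
    (hnonneg : ∀ i j, 0 ≤ P i j) (hrow : ∀ i, ∑ j, P i j = 1)
    (hrat : ∀ i j, ∃ k : ℕ, (m : ℝ) * P i j = k)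
    (r : Fin n → ℝ)
    (hr : ∀ i, ∃ q : ℤ, r i = (q : ℝ) / m ∧ |q| ≤ (rinf : ℤ))
    (s : Fin n) :
    (detOneSubXSmulUpdateCol P r s).natDegree ≤ n - 1 ∧
    (∀ k : ℕ, ∃ z : ℤ, ((m : ℝ) ^ n * (detOneSubXSmulUpdateCol P r s).coeff k) = z) ∧
    (∀ k : ℕ, |(m : ℝ) ^ n * (detOneSubXSmulUpdateCol P r s).coeff k| ≤
      2 * (m : ℝ) ^ n * n * rinf * (n - 1).choose k) ∧
    (∑ k ∈ (C ((m : ℝ) ^ n) * detOneSubXSmulUpdateCol P r s).support,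
        |(C ((m : ℝ) ^ n) * detOneSubXSmulUpdateCol P r s).coeff k| ≤
      (m : ℝ) ^ n * n * rinf * 2 ^ n) := by
  rw [detOneSubXSmulUpdateCol_eq_det]
  set N := (P.oneSubXSmulUpdateCol r s).det
  have hr_le (i : Fin n) : |r i| ≤ rinf := by
    obtain ⟨q, hq_eq, hq⟩ := hr i
    rw [hq_eq, abs_div, Nat.abs_cast]
    exact (div_le_self (abs_nonneg _) (by exact_mod_cast hm)).trans (by exact_mod_cast hq)
  have hN (k : ℕ) : |N.coeff k| ≤ n * rinf * (n - 1).choose k := by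
    simpa using Matrix.abs_coeff_det_oneSubXSmulUpdateCol_le_of_abs_le P r s hnonneg
      (fun i => (hrow i).le) hr_le k
  have hbound (k : ℕ) :
      |(m : ℝ) ^ n * N.coeff k| ≤ 2 * (m : ℝ) ^ n * n * rinf * (n - 1).choose k := by
    have hmn : (0 : ℝ) ≤ (m : ℝ) ^ n := by positivity
    rw [abs_mul, abs_of_nonneg hmn]
    nlinarith [mul_le_mul_of_nonneg_left (hN k) hmn,
      show (0 : ℝ) ≤ (m : ℝ) ^ n * n * rinf * (n - 1).choose k by positivity]
  have hint (k : ℕ) : ∃ z : ℤ, (m : ℝ) ^ n * N.coeff k = z := by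
    have hm₀ : (m : ℝ) ≠ 0 := by positivity
    simpa using Matrix.exists_intCast_eq_pow_mul_coeff_det_oneSubXSmulUpdateCol (c := m) P r s
      (fun i j => (hrat i j).elim fun k hk => ⟨k, by simpa using hk⟩)
      (fun i => (hr i).imp fun q hq => by simp [hq.1, mul_div_cancel₀ _ hm₀]) k
  refine ⟨natDegree_le_of_abs_coeff_le_mul_choose hN, hint, hbound, ?_⟩
  obtain ⟨n', rfl⟩ : ∃ n', n = n' + 1 := ⟨n - 1, by have := s.pos; omega⟩
  calc _ ≤ 2 * (m : ℝ) ^ (n' + 1) * (n' + 1 : ℕ) * rinf * 2 ^ (n' + 1 - 1) :=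
        sum_abs_coeff_le_of_abs_coeff_le_mul_choose fun k => by rw [coeff_C_mul]; exact hbound k
    _ = _ := by push_cast; ring

/-- Let `P` be `n × n` row-stochastic with `m • P` having natural-number entries, and let
`r` have entries `qᵢ/m` with `qᵢ ∈ ℤ`, `|qᵢ| ≤ r∞`. Then `N_s` has degree at most `n - 1`,
`m^n • N_s` has integer coefficients, its `k`-th coefficient is at most
`2 * m^n * n * r∞ * C(n-1,k)` in absolute value, and the sum of the absolute values of its
coefficients is at most `m^n * n * r∞ * 2^n`. -/
theorem det_one_sub_X_smul_updateColumn_bounds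
    (n m : ℕ) (rinf : ℕ) (hn : 1 ≤ n) (hm : 1 ≤ m)
    (P : Matrix (Fin n) (Fin n) ℝ)
    (hnonneg : ∀ i j, 0 ≤ P i j) (hrow : ∀ i, ∑ j, P i j = 1)
    (hrat : ∀ i j, ∃ k : ℕ, (m : ℝ) * P i j = k)
    (r : Fin n → ℝ)
    (hr : ∀ i, ∃ q : ℤ, r i = (q : ℝ) / m ∧ |q| ≤ (rinf : ℤ))
    (s : Fin n) :
    (detOneSubXSmulUpdateCol P r s).natDegree ≤ n - 1 ∧
    (∀ k : ℕ, ∃ z : ℤ, ((m : ℝ) ^ n * (detOneSubXSmulUpdateCol P r s).coeff k) = z) ∧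
    (∀ k : ℕ, |(m : ℝ) ^ n * (detOneSubXSmulUpdateCol P r s).coeff k| ≤
      2 * (m : ℝ) ^ n * n * rinf * (n - 1).choose k) ∧
    (∑ k ∈ (C ((m : ℝ) ^ n) * detOneSubXSmulUpdateCol P r s).support,
        |(C ((m : ℝ) ^ n) * detOneSubXSmulUpdateCol P r s).coeff k| ≤
      (m : ℝ) ^ n * n * rinf * 2 ^ n) :=
  det_one_sub_X_smul_updateColumn_bounds_general n m rinf hm P hnonneg hrow hrat r hr s
end

section
/- Let the MDP (S, A, r, P) satisfy Assumption R with parameters m and r∞, let π, π' be policies and s ∈ S a state. Let D_π(X) = det(I − X·P_π), D_{π'}(X) = det(I − X·P_{π'}), and let N_{s,π}(X) (resp. N_{s,π'}(X)) be the determinant of the matrix obtained from I − X·P_π (resp. I − X·P_{π'}) by replacing its s-th column with r_π (resp. r_{π'}). Define p = N_{s,π}·D_{π'} − N_{s,π'}·D_π. Then p has degree at most 2|S| − 1, the polynomial m^{2|S|}·p has integer coefficients, and the sum of the absolute values of the coefficients of m^{2|S|}·p is at most L = 2·|S|·r∞·m^{2|S|}·4^{|S|}. -/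
open Polynomial

/-- `D_π(X) = det (I - X • P_π)`, computed in `ℝ[X]`. -/
noncomputable def polyD {S A : Type*} [Fintype S] [DecidableEq S]
    (P : S → A → S → ℝ) (π : S → A) : Polynomial ℝ :=
  Matrix.det ((1 : Matrix S S ℝ[X]) - (X : ℝ[X]) • (policyMatrix P π).map C)

/-- `N_{s,π}(X)`: the determinant of the matrix obtained from `I - X • P_π` by replacing
its `s`-th column with the reward vector `r_π`. -/
noncomputable def polyN {S A : Type*} [Fintype S] [DecidableEq S]
    (r : S → A → ℝ) (P : S → A → S → ℝ) (π : S → A) (s : S) : Polynomial ℝ :=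
  Matrix.det
    (((1 : Matrix S S ℝ[X]) - (X : ℝ[X]) • (policyMatrix P π).map C).updateCol s
      fun i => C (policyReward r π i))

/-!
Write `A_π = 1 - X • P_π`. Its entries have degree at most one and the reward column is
constant, which bounds the degrees. The matrices `m • A_π` and `m • r_π` have integer entries and
their determinants are `m ^ |S| • D_π` and `m ^ |S| • N_{s,π}`, which gives integrality. For the
coefficient bound, the ℓ¹ norm of coefficients is submultiplicative, so the ℓ¹ norm of a
determinant is at most the product over rows of the summed entry norms; each row of `A_π` has
sum `2` because `P_π` is row stochastic. Expanding `N_{s,π}` along column `s`, each cofactor is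
the determinant of `A_π` with one row replaced by a unit vector, hence has norm at most
`2 ^ (|S| - 1)`.
-/

open Finset Matrix

theorem Finset.sum_perm_prod_le_prod_sum {S : Type*} [Fintype S] [DecidableEq S]
    (f : S → S → ℝ) (hf : ∀ i j, 0 ≤ f i j) :
    ∑ σ : Equiv.Perm S, ∏ i, f i (σ i) ≤ ∏ i, ∑ j, f i j := by
  rw [prod_univ_sum]
  calc ∑ σ : Equiv.Perm S, ∏ i, f i (σ i)
      = ∑ g ∈ univ.image fun σ : Equiv.Perm S => (σ : S → S), ∏ i, f i (g i) := by
        rw [sum_image fun _ _ _ _ h => Equiv.coe_fn_injective h]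
    _ ≤ _ := sum_le_sum_of_subset_of_nonneg (by simp) fun g _ _ => prod_nonneg fun i _ => hf _ _

theorem Matrix.det_mem_of_forall_mem {S R : Type*} [Fintype S] [DecidableEq S] [CommRing R]
    (T : Subring R) {M : Matrix S S R} (hM : ∀ i j, M i j ∈ T) : M.det ∈ T := by
  rw [det_apply]
  exact T.sum_mem fun σ _ => T.zsmul_mem (T.prod_mem fun i _ => hM _ _) _

theorem natCast_mul_intCast_div_natCast_mem_range (m : ℕ) (q : ℤ) :
    (m : ℝ) * (q / m) ∈ Set.range (Int.cast : ℤ → ℝ) := by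
  rcases eq_or_ne m 0 with rfl | hm
  · exact ⟨0, by simp⟩
  · exact ⟨q, by field_simp⟩

theorem abs_intCast_div_natCast_le (q : ℤ) (m : ℕ) : |(q : ℝ) / m| ≤ |(q : ℝ)| := by
  rcases eq_or_ne m 0 with rfl | hm
  · simp
  · rw [abs_div, Nat.abs_cast]
    exact div_le_self (abs_nonneg (q : ℝ)) (Nat.one_le_cast.mpr (Nat.one_le_iff_ne_zero.mpr hm))

namespace Polynomial

def l1Norm (p : ℝ[X]) : ℝ := ∑ k ∈ p.support, |p.coeff k|

theorem l1Norm_nonneg (p : ℝ[X]) : 0 ≤ p.l1Norm :=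
  sum_nonneg fun _ _ => abs_nonneg _

theorem l1Norm_eq_sum_of_support_subset {p : ℝ[X]} {t : Finset ℕ} (h : p.support ⊆ t) :
    p.l1Norm = ∑ k ∈ t, |p.coeff k| :=
  sum_subset h fun k _ hk => by rw [notMem_support_iff.mp hk, abs_zero]

theorem l1Norm_zero : (0 : ℝ[X]).l1Norm = 0 := by
  simp [l1Norm]

theorem l1Norm_monomial (n : ℕ) (a : ℝ) : (monomial n a).l1Norm = |a| := by
  simp [l1Norm_eq_sum_of_support_subset (support_monomial_subset n a)]

theorem l1Norm_C (a : ℝ) : (C a).l1Norm = |a| := by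
  rw [← monomial_zero_left, l1Norm_monomial]

theorem l1Norm_one : (1 : ℝ[X]).l1Norm = 1 := by
  simpa using l1Norm_C 1

theorem l1Norm_neg (p : ℝ[X]) : (-p).l1Norm = p.l1Norm := by
  simp [l1Norm]

theorem l1Norm_add_le (p q : ℝ[X]) : (p + q).l1Norm ≤ p.l1Norm + q.l1Norm := by
  rw [l1Norm_eq_sum_of_support_subset support_add,
    l1Norm_eq_sum_of_support_subset (p := p) subset_union_left,
    l1Norm_eq_sum_of_support_subset (p := q) subset_union_right, ← sum_add_distrib]
  exact sum_le_sum fun k _ => by simpa only [coeff_add] using abs_add_le _ _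

theorem l1Norm_sub_le (p q : ℝ[X]) : (p - q).l1Norm ≤ p.l1Norm + q.l1Norm := by
  simpa only [sub_eq_add_neg, l1Norm_neg] using l1Norm_add_le p (-q)

theorem l1Norm_sum_le {ι : Type*} (t : Finset ι) (f : ι → ℝ[X]) :
    (∑ i ∈ t, f i).l1Norm ≤ ∑ i ∈ t, (f i).l1Norm :=
  le_sum_of_subadditive _ l1Norm_zero.le l1Norm_add_le t f

theorem l1Norm_C_mul (a : ℝ) (p : ℝ[X]) : (C a * p).l1Norm = |a| * p.l1Norm := by
  rw [← smul_eq_C_mul, l1Norm_eq_sum_of_support_subset (support_smul a p), l1Norm, mul_sum]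
  simp only [coeff_smul, smul_eq_mul, abs_mul]

theorem l1Norm_units_smul (u : ℤˣ) (p : ℝ[X]) : (u • p).l1Norm = p.l1Norm := by
  rcases Int.units_eq_one_or u with rfl | rfl <;> simp [l1Norm_neg]

theorem l1Norm_mul_le (p q : ℝ[X]) : (p * q).l1Norm ≤ p.l1Norm * q.l1Norm := by
  rw [mul_eq_sum_sum]
  calc _ ≤ ∑ i ∈ p.support, (q.sum fun j a => monomial (i + j) (p.coeff i * a)).l1Norm :=
        l1Norm_sum_le _ _
    _ ≤ ∑ i ∈ p.support, ∑ j ∈ q.support, |p.coeff i| * |q.coeff j| :=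
        sum_le_sum fun i _ => (l1Norm_sum_le _ _).trans_eq <| by
          simp only [l1Norm_monomial, abs_mul]
    _ = p.l1Norm * q.l1Norm := (sum_mul_sum _ _ _ _).symm

theorem l1Norm_prod_le {ι : Type*} (t : Finset ι) (f : ι → ℝ[X]) :
    (∏ i ∈ t, f i).l1Norm ≤ ∏ i ∈ t, (f i).l1Norm := by
  induction t using Finset.cons_induction with
  | empty => simp [l1Norm_one]
  | cons a t ha ih =>
    rw [prod_cons, prod_cons]
    exact (l1Norm_mul_le _ _).trans (mul_le_mul_of_nonneg_left ih (l1Norm_nonneg _))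

section Determinant

variable {S : Type*} [Fintype S] [DecidableEq S]

theorem natDegree_det_le_sum {R : Type*} [CommRing R] (M : Matrix S S R[X]) (d : S → ℕ)
    (h : ∀ i j, (M i j).natDegree ≤ d j) : M.det.natDegree ≤ ∑ j, d j := by
  rw [det_apply]
  refine natDegree_sum_le_of_forall_le _ _ fun σ _ => (natDegree_smul_le _ _).trans ?_
  exact (natDegree_prod_le _ _).trans (sum_le_sum fun i _ => h _ _)

theorem l1Norm_det_le (M : Matrix S S ℝ[X]) : M.det.l1Norm ≤ ∏ i, ∑ j, (M i j).l1Norm := by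
  rw [← det_transpose, det_apply]
  calc _ ≤ ∑ σ : Equiv.Perm S, (Equiv.Perm.sign σ • ∏ i, Mᵀ (σ i) i).l1Norm :=
        l1Norm_sum_le _ _
    _ ≤ ∑ σ : Equiv.Perm S, ∏ i, (M i (σ i)).l1Norm :=
        sum_le_sum fun σ _ => (l1Norm_units_smul _ _).trans_le (l1Norm_prod_le _ _)
    _ ≤ _ := sum_perm_prod_le_prod_sum _ fun _ _ => l1Norm_nonneg _

theorem l1Norm_det_le_pow (M : Matrix S S ℝ[X]) {R : ℝ} (hM : ∀ i, ∑ j, (M i j).l1Norm ≤ R) :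
    M.det.l1Norm ≤ R ^ Fintype.card S :=
  (l1Norm_det_le M).trans <|
    (prod_le_prod (fun _ _ => sum_nonneg fun _ _ => l1Norm_nonneg _) fun i _ => hM i).trans_eq
      (by rw [prod_const, card_univ])

theorem l1Norm_det_updateRow_single_le (M : Matrix S S ℝ[X]) {R : ℝ}
    (hM : ∀ i, ∑ j, (M i j).l1Norm ≤ R) (k s : S) :
    (M.updateRow k (Pi.single s 1)).det.l1Norm ≤ R ^ (Fintype.card S - 1) := by
  have hrow : ∀ i, ∑ j, (M.updateRow k (Pi.single s 1) i j).l1Norm ≤ if i = k then 1 else R := by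
    intro i
    split_ifs with hi
    · subst hi
      simp [Pi.apply_single (fun _ => l1Norm) (fun _ => l1Norm_zero), l1Norm_one]
    · simpa [updateRow_ne hi] using hM i
  refine (l1Norm_det_le _).trans <|
    (prod_le_prod (fun _ _ => sum_nonneg fun _ _ => l1Norm_nonneg _) fun i _ => hrow i).trans_eq ?_
  rw [← mul_prod_erase _ _ (mem_univ k), if_pos rfl, one_mul,
    prod_congr rfl fun i hi => if_neg (ne_of_mem_erase hi), prod_const,
    card_erase_of_mem (mem_univ k), card_univ]

theorem l1Norm_det_updateCol_le (M : Matrix S S ℝ[X]) {R : ℝ}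
    (hM : ∀ i, ∑ j, (M i j).l1Norm ≤ R) (s : S) (v : S → ℝ) :
    (M.updateCol s fun i => C (v i)).det.l1Norm ≤ (∑ i, |v i|) * R ^ (Fintype.card S - 1) := by
  rw [← cramer_apply, cramer_eq_adjugate_mulVec, mulVec, dotProduct, sum_mul]
  refine (l1Norm_sum_le _ _).trans (sum_le_sum fun k _ => ?_)
  rw [mul_comm, l1Norm_C_mul, adjugate_apply]
  exact mul_le_mul_of_nonneg_left (l1Norm_det_updateRow_single_le M hM k s) (abs_nonneg _)

end Determinant

theorem one_sub_X_smul_map_C_apply {S R : Type*} [DecidableEq S] [CommRing R]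
    (Q : Matrix S S R) (i j : S) :
    ((1 : Matrix S S R[X]) - (X : R[X]) • Q.map C) i j =
      C ((1 : Matrix S S R) i j) - C (Q i j) * X := by
  rw [Matrix.sub_apply, Matrix.smul_apply, map_apply, smul_eq_mul, X_mul_C, one_apply, one_apply,
    apply_ite C, C_1, C_0]

theorem natDegree_one_sub_X_smul_map_C_apply_le {S R : Type*} [DecidableEq S] [CommRing R]
    (Q : Matrix S S R) (i j : S) :
    (((1 : Matrix S S R[X]) - (X : R[X]) • Q.map C) i j).natDegree ≤ 1 := by
  rw [one_sub_X_smul_map_C_apply]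
  compute_degree

theorem sum_l1Norm_one_sub_X_smul_map_C_apply_le {S : Type*} [Fintype S] [DecidableEq S]
    {Q : Matrix S S ℝ} (hQ : Q ∈ rowStochastic ℝ S) (i : S) :
    ∑ j, (((1 : Matrix S S ℝ[X]) - (X : ℝ[X]) • Q.map C) i j).l1Norm ≤ 2 := by
  calc _ ≤ ∑ j, (|(1 : Matrix S S ℝ) i j| + Q i j) := sum_le_sum fun j _ => by
        rw [one_sub_X_smul_map_C_apply]
        refine (l1Norm_sub_le _ _).trans_eq ?_
        rw [l1Norm_C, C_mul_X_eq_monomial, l1Norm_monomial,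
          abs_of_nonneg (nonneg_of_mem_rowStochastic hQ)]
    _ = 2 := by
        rw [sum_add_distrib, sum_row_of_mem_rowStochastic hQ]
        simp [one_apply, apply_ite abs]
        norm_num

theorem C_mem_liftsRing_intCast {a : ℝ} (ha : a ∈ Set.range (Int.cast : ℤ → ℝ)) :
    C a ∈ liftsRing (Int.castRingHom ℝ) := by
  obtain ⟨z, rfl⟩ := ha
  exact (lifts_iff_liftsRing _ _).mp (C_mem_lifts _ z)

theorem C_smul_one_sub_X_smul_map_C_apply_mem_liftsRing {S : Type*} [DecidableEq S]
    {Q : Matrix S S ℝ} {c : ℝ} (hc : c ∈ Set.range (Int.cast : ℤ → ℝ))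
    (hQ : ∀ i j, c * Q i j ∈ Set.range (Int.cast : ℤ → ℝ)) (i j : S) :
    (C c • ((1 : Matrix S S ℝ[X]) - (X : ℝ[X]) • Q.map C)) i j ∈
      liftsRing (Int.castRingHom ℝ) := by
  have hc1 : c * (1 : Matrix S S ℝ) i j ∈ Set.range (Int.cast : ℤ → ℝ) := by
    rw [one_apply]; split_ifs <;> simp [hc]
  rw [Matrix.smul_apply, one_sub_X_smul_map_C_apply, smul_eq_mul, mul_sub, ← mul_assoc,
    ← C_mul, ← C_mul]
  exact sub_mem (C_mem_liftsRing_intCast hc1)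
    (mul_mem (C_mem_liftsRing_intCast (hQ i j)) ((lifts_iff_liftsRing _ _).mp (X_mem_lifts _)))

end Polynomial

theorem sum_abs_policyReward_le {S A : Type*} [Fintype S] {r : S → A → ℝ} {B : ℝ}
    (hr : ∀ i a, |r i a| ≤ B) (ρ : S → A) :
    ∑ i, |policyReward r ρ i| ≤ Fintype.card S * B :=
  (sum_le_sum fun i _ => hr i (ρ i)).trans_eq (by rw [sum_const, card_univ, nsmul_eq_mul])

section MDP

variable {S A : Type*} [Fintype S] [DecidableEq S] (r : S → A → ℝ) (P : S → A → S → ℝ)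

theorem policyMatrix_mem_rowStochastic (hP0 : ∀ s a s', 0 ≤ P s a s')
    (hP1 : ∀ s a, ∑ s', P s a s' = 1) (π : S → A) : policyMatrix P π ∈ rowStochastic ℝ S :=
  mem_rowStochastic_iff_sum.mpr ⟨fun i j => hP0 i (π i) j, fun i => hP1 i (π i)⟩

theorem natDegree_polyD_le (π : S → A) : (polyD P π).natDegree ≤ Fintype.card S := by
  rw [polyD]
  refine (natDegree_det_le_sum _ (fun _ => 1) fun i j => ?_).trans_eq (by simp)
  exact natDegree_one_sub_X_smul_map_C_apply_le _ i j

theorem natDegree_polyN_le (π : S → A) (s : S) :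
    (polyN r P π s).natDegree ≤ Fintype.card S - 1 := by
  rw [polyN]
  refine (natDegree_det_le_sum _ (fun j => if j = s then 0 else 1) fun i j => ?_).trans_eq ?_
  · rcases eq_or_ne j s with rfl | hj
    · simp
    · rw [updateCol_ne hj, if_neg hj]
      exact natDegree_one_sub_X_smul_map_C_apply_le _ i j
  · simp [sum_ite, filter_ne', card_erase_of_mem]

theorem l1Norm_polyD_le {π : S → A} (hπ : policyMatrix P π ∈ rowStochastic ℝ S) :
    (polyD P π).l1Norm ≤ 2 ^ Fintype.card S :=
  l1Norm_det_le_pow _ (sum_l1Norm_one_sub_X_smul_map_C_apply_le hπ)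

theorem l1Norm_polyN_le {π : S → A} (hπ : policyMatrix P π ∈ rowStochastic ℝ S) (s : S) :
    (polyN r P π s).l1Norm ≤ (∑ i, |policyReward r π i|) * 2 ^ (Fintype.card S - 1) :=
  l1Norm_det_updateCol_le _ (sum_l1Norm_one_sub_X_smul_map_C_apply_le hπ) s _

theorem C_pow_mul_polyD_mem_liftsRing {c : ℝ} (hc : c ∈ Set.range (Int.cast : ℤ → ℝ))
    {π : S → A} (hcP : ∀ i j, c * policyMatrix P π i j ∈ Set.range (Int.cast : ℤ → ℝ)) :
    C (c ^ Fintype.card S) * polyD P π ∈ liftsRing (Int.castRingHom ℝ) := by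
  rw [map_pow, polyD, ← det_smul]
  exact det_mem_of_forall_mem _ (C_smul_one_sub_X_smul_map_C_apply_mem_liftsRing hc hcP)

theorem C_pow_mul_polyN_mem_liftsRing {c : ℝ} (hc : c ∈ Set.range (Int.cast : ℤ → ℝ))
    {π : S → A} (hcP : ∀ i j, c * policyMatrix P π i j ∈ Set.range (Int.cast : ℤ → ℝ))
    (hcr : ∀ i, c * policyReward r π i ∈ Set.range (Int.cast : ℤ → ℝ)) (s : S) :
    C (c ^ Fintype.card S) * polyN r P π s ∈ liftsRing (Int.castRingHom ℝ) := by
  have hn : 1 ≤ Fintype.card S := Fintype.card_pos_iff.mpr ⟨s⟩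
  have hscale : C (c ^ Fintype.card S) * polyN r P π s =
      ((C c • ((1 : Matrix S S ℝ[X]) - (X : ℝ[X]) • (policyMatrix P π).map C)).updateCol s
        (C c • fun i => C (policyReward r π i))).det := by
    rw [det_updateCol_smul, det_updateCol_smul_left, ← mul_assoc, ← pow_succ',
      Nat.sub_add_cancel hn, map_pow, polyN]
  rw [hscale]
  refine det_mem_of_forall_mem _ fun i j => ?_
  rcases eq_or_ne j s with rfl | hj
  · rw [updateCol_self, Pi.smul_apply, smul_eq_mul, ← C_mul]
    exact C_mem_liftsRing_intCast (hcr i)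
  · rw [updateCol_ne hj]
    exact C_smul_one_sub_X_smul_map_C_apply_mem_liftsRing hc hcP i j

theorem natDegree_polyN_mul_polyD_sub_le (π π' : S → A) (s : S) :
    (polyN r P π s * polyD P π' - polyN r P π' s * polyD P π).natDegree ≤
      2 * Fintype.card S - 1 := by
  have hN := natDegree_polyN_le r P π s
  have hN' := natDegree_polyN_le r P π' s
  have hD := natDegree_polyD_le P π
  have hD' := natDegree_polyD_le P π'
  exact (natDegree_sub_le _ _).trans
    (max_le (natDegree_mul_le.trans (by omega)) (natDegree_mul_le.trans (by omega)))

theorem l1Norm_polyN_mul_polyD_sub_le {π π' : S → A} (hπ : policyMatrix P π ∈ rowStochastic ℝ S)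
    (hπ' : policyMatrix P π' ∈ rowStochastic ℝ S) {B : ℝ}
    (hB : ∑ i, |policyReward r π i| ≤ B) (hB' : ∑ i, |policyReward r π' i| ≤ B) (s : S) :
    (polyN r P π s * polyD P π' - polyN r P π' s * polyD P π).l1Norm ≤
      2 * B * 4 ^ Fintype.card S := by
  have hB0 : 0 ≤ B := (sum_nonneg fun _ _ => abs_nonneg _).trans hB
  have hN : ∀ {ρ : S → A}, policyMatrix P ρ ∈ rowStochastic ℝ S →
      ∑ i, |policyReward r ρ i| ≤ B → (polyN r P ρ s).l1Norm ≤ B * 2 ^ Fintype.card S :=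
    fun hρ hBρ => (l1Norm_polyN_le r P hρ s).trans <| mul_le_mul hBρ
      (pow_le_pow_right₀ one_le_two (Nat.sub_le _ _)) (by positivity) hB0
  calc _ ≤ (polyN r P π s).l1Norm * (polyD P π').l1Norm +
        (polyN r P π' s).l1Norm * (polyD P π).l1Norm :=
        (l1Norm_sub_le _ _).trans (add_le_add (l1Norm_mul_le _ _) (l1Norm_mul_le _ _))
    _ ≤ B * 2 ^ Fintype.card S * 2 ^ Fintype.card S +
        B * 2 ^ Fintype.card S * 2 ^ Fintype.card S :=
        add_le_add
          (mul_le_mul (hN hπ hB) (l1Norm_polyD_le P hπ') (l1Norm_nonneg _) (by positivity))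
          (mul_le_mul (hN hπ' hB') (l1Norm_polyD_le P hπ) (l1Norm_nonneg _) (by positivity))
    _ = 2 * B * 4 ^ Fintype.card S := by
        rw [show (4 : ℝ) = 2 * 2 by norm_num, mul_pow]
        ring

theorem C_pow_mul_polyN_mul_polyD_sub_mem_liftsRing {c : ℝ}
    (hc : c ∈ Set.range (Int.cast : ℤ → ℝ))
    (hcP : ∀ i a j, c * P i a j ∈ Set.range (Int.cast : ℤ → ℝ))
    (hcr : ∀ i a, c * r i a ∈ Set.range (Int.cast : ℤ → ℝ)) (π π' : S → A) (s : S) :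
    C (c ^ (2 * Fintype.card S)) * (polyN r P π s * polyD P π' - polyN r P π' s * polyD P π) ∈
      liftsRing (Int.castRingHom ℝ) := by
  have hsplit : C (c ^ (2 * Fintype.card S)) *
      (polyN r P π s * polyD P π' - polyN r P π' s * polyD P π) =
      C (c ^ Fintype.card S) * polyN r P π s * (C (c ^ Fintype.card S) * polyD P π') -
        C (c ^ Fintype.card S) * polyN r P π' s * (C (c ^ Fintype.card S) * polyD P π) := by
    rw [two_mul, pow_add, C_mul]
    ring
  have hN : ∀ ρ, C (c ^ Fintype.card S) * polyN r P ρ s ∈ liftsRing (Int.castRingHom ℝ) :=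
    fun ρ => C_pow_mul_polyN_mem_liftsRing r P hc (fun i j => hcP i (ρ i) j)
      (fun i => hcr i (ρ i)) s
  have hD : ∀ ρ, C (c ^ Fintype.card S) * polyD P ρ ∈ liftsRing (Int.castRingHom ℝ) :=
    fun ρ => C_pow_mul_polyD_mem_liftsRing P hc fun i j => hcP i (ρ i) j
  rw [hsplit]
  exact sub_mem (mul_mem (hN π) (hD π')) (mul_mem (hN π') (hD π))

end MDP

theorem poly_p_degree_int_coeffs_sum_bound_general {S A : Type*} [Fintype S] [DecidableEq S]
    (r : S → A → ℝ) (P : S → A → S → ℝ) (m rinf : ℕ)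
    (hP : ∀ s a s', ∃ k : ℕ, k ≤ m ∧ P s a s' = (k : ℝ) / m)
    (hP0 : ∀ s a s', 0 ≤ P s a s') (hP1 : ∀ s a, ∑ s', P s a s' = 1)
    (hr : ∀ s a, ∃ q : ℤ, r s a = (q : ℝ) / m ∧ |q| ≤ (rinf : ℤ))
    (π π' : S → A) (s : S) :
    (polyN r P π s * polyD P π' - polyN r P π' s * polyD P π).natDegree ≤
        2 * Fintype.card S - 1 ∧
    (∀ k : ℕ, ∃ z : ℤ,
      (m : ℝ) ^ (2 * Fintype.card S) *
        (polyN r P π s * polyD P π' - polyN r P π' s * polyD P π).coeff k = z) ∧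
    (∑ k ∈ (C ((m : ℝ) ^ (2 * Fintype.card S)) *
          (polyN r P π s * polyD P π' - polyN r P π' s * polyD P π)).support,
        |(C ((m : ℝ) ^ (2 * Fintype.card S)) *
          (polyN r P π s * polyD P π' - polyN r P π' s * polyD P π)).coeff k| ≤
      2 * Fintype.card S * rinf * (m : ℝ) ^ (2 * Fintype.card S) * 4 ^ Fintype.card S) := by
  have hmP : ∀ i a j, (m : ℝ) * P i a j ∈ Set.range (Int.cast : ℤ → ℝ) := fun i a j => by
    obtain ⟨k, -, hk⟩ := hP i a j
    rw [hk, ← Int.cast_natCast k]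
    exact natCast_mul_intCast_div_natCast_mem_range m k
  have hmr : ∀ i a, (m : ℝ) * r i a ∈ Set.range (Int.cast : ℤ → ℝ) := fun i a => by
    obtain ⟨q, hq, -⟩ := hr i a
    rw [hq]
    exact natCast_mul_intCast_div_natCast_mem_range m q
  have hrB : ∀ i a, |r i a| ≤ rinf := fun i a => by
    obtain ⟨q, hq, hqr⟩ := hr i a
    rw [hq]
    exact (abs_intCast_div_natCast_le q m).trans (by exact_mod_cast hqr)
  have hB := sum_abs_policyReward_le hrB
  have hstoch := policyMatrix_mem_rowStochastic P hP0 hP1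
  refine ⟨natDegree_polyN_mul_polyD_sub_le r P π π' s, fun k => ?_, ?_⟩
  · obtain ⟨z, hz⟩ := (lifts_iff_coeff_lifts _).mp ((lifts_iff_liftsRing _ _).mpr
      (C_pow_mul_polyN_mul_polyD_sub_mem_liftsRing r P ⟨m, by simp⟩ hmP hmr π π' s)) k
    exact ⟨z, by rw [← coeff_C_mul, ← hz, eq_intCast]⟩
  · change (C _ * _).l1Norm ≤ _
    rw [l1Norm_C_mul, abs_of_nonneg (by positivity)]
    calc _ ≤ (m : ℝ) ^ (2 * Fintype.card S) *
          (2 * (Fintype.card S * rinf) * 4 ^ Fintype.card S) :=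
          mul_le_mul_of_nonneg_left
            (l1Norm_polyN_mul_polyD_sub_le r P (hstoch π) (hstoch π') (hB π) (hB π') s)
            (by positivity)
      _ = _ := by ring

/-- Under Assumption R (rational data with common denominator `m` and reward numerators
bounded by `r∞`), the polynomial `p = N_{s,π} D_{π'} - N_{s,π'} D_π` has degree at most
`2|S| - 1`, `m^{2|S|} • p` has integer coefficients, and the sum of the absolute values of
the coefficients of `m^{2|S|} • p` is at most `L = 2 |S| r∞ m^{2|S|} 4^{|S|}`. -/
theorem poly_p_degree_int_coeffs_sum_bound {S A : Type*} [Fintype S] [DecidableEq S]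
    [Nonempty S] [Fintype A] [Nonempty A]
    (r : S → A → ℝ) (P : S → A → S → ℝ) (m rinf : ℕ) (hm : 1 ≤ m)
    (hP : ∀ s a s', ∃ k : ℕ, k ≤ m ∧ P s a s' = (k : ℝ) / m)
    (hP0 : ∀ s a s', 0 ≤ P s a s') (hP1 : ∀ s a, ∑ s', P s a s' = 1)
    (hr : ∀ s a, ∃ q : ℤ, r s a = (q : ℝ) / m ∧ |q| ≤ (rinf : ℤ))
    (π π' : S → A) (s : S) :
    (polyN r P π s * polyD P π' - polyN r P π' s * polyD P π).natDegree ≤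
        2 * Fintype.card S - 1 ∧
    (∀ k : ℕ, ∃ z : ℤ,
      (m : ℝ) ^ (2 * Fintype.card S) *
        (polyN r P π s * polyD P π' - polyN r P π' s * polyD P π).coeff k = z) ∧
    (∑ k ∈ (C ((m : ℝ) ^ (2 * Fintype.card S)) *
          (polyN r P π s * polyD P π' - polyN r P π' s * polyD P π)).support,
        |(C ((m : ℝ) ^ (2 * Fintype.card S)) *
          (polyN r P π s * polyD P π' - polyN r P π' s * polyD P π)).coeff k| ≤
      2 * Fintype.card S * rinf * (m : ℝ) ^ (2 * Fintype.card S) * 4 ^ Fintype.card S) :=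
  poly_p_degree_int_coeffs_sum_bound_general r P m rinf hP hP0 hP1 hr π π' s
end

section
/- Let the MDP (S, A, r, P) satisfy Assumption R with parameters m and r∞, and let π, π' be policies and s ∈ S a state such that the map γ ↦ v^π_{γ,s} − v^{π'}_{γ,s} is not identically zero on [0,1). Then every γ̂ ∈ [0,1) with v^π_{γ̂,s} = v^{π'}_{γ̂,s} satisfies γ̂ < 1 − η(M), where N = 2|S| − 1, L = 2·|S|·r∞·m^{2|S|}·4^{|S|}, and η(M) = 1/(2·N^{N/2+2}·(L+1)^N). -/
open Matrix

/-!
Clearing denominators, `m • (1 - γ • P_π) = m • 1 - γ • K_π` with `K_π` a nonnegative integer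
matrix whose rows sum to `m`; it is strictly diagonally dominant for `γ < 1`. By Cramer's rule
`v^π_{γ,s} = a_π(γ - 1) / d_π(γ - 1)` for integer polynomials `d_π`, `a_π` (a determinant and a
cofactor expansion) in the shifted variable `x = γ - 1`. The rows of `m • 1 - (1 + x) • K_π` have
coefficient ℓ¹-mass at most `3m`, and the coefficient ℓ¹-norm is submultiplicative, so
`g = a_π d_π' - a_π' d_π` is a nonzero integer polynomial with `‖g‖₁ ≤ 2 |S| r∞ (3m)^(2|S|-1)`
vanishing at `γ̂ - 1`. Finally, a root `0 < |x| ≤ 1` of a nonzero integer polynomial satisfies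
`1 ≤ |x| ‖g‖₁`: divide by the lowest power of `x` and compare with the trailing coefficient,
a nonzero integer. Hence `1 - γ̂ ≥ 1 / ‖g‖₁ > η`.
-/

open Polynomial Finset

namespace Polynomial

section SeminormedRing

variable {R : Type*} [SeminormedRing R]

noncomputable def sumNormCoeff (p : R[X]) : ℝ :=
  p.sum fun _ a => ‖a‖

theorem sumNormCoeff_eq_sum_of_support_subset {p : R[X]} {s : Finset ℕ} (hs : p.support ⊆ s) :
    p.sumNormCoeff = ∑ n ∈ s, ‖p.coeff n‖ :=
  sum_eq_of_subset _ (fun _ => norm_zero) hs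

theorem sumNormCoeff_nonneg (p : R[X]) : 0 ≤ p.sumNormCoeff :=
  Finset.sum_nonneg fun _ _ => norm_nonneg _

@[simp]
theorem sumNormCoeff_zero : (0 : R[X]).sumNormCoeff = 0 :=
  sum_zero_index _

@[simp]
theorem sumNormCoeff_monomial (n : ℕ) (a : R) : (monomial n a).sumNormCoeff = ‖a‖ :=
  sum_monomial_index _ _ norm_zero

@[simp]
theorem sumNormCoeff_C (a : R) : (C a).sumNormCoeff = ‖a‖ :=
  sum_C_index norm_zero

@[simp]
theorem sumNormCoeff_neg (p : R[X]) : (-p).sumNormCoeff = p.sumNormCoeff := by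
  simp [sumNormCoeff, sum_def]

theorem sumNormCoeff_add_le (p q : R[X]) :
    (p + q).sumNormCoeff ≤ p.sumNormCoeff + q.sumNormCoeff := by
  classical
  rw [sumNormCoeff_eq_sum_of_support_subset support_add,
    sumNormCoeff_eq_sum_of_support_subset subset_union_left,
    sumNormCoeff_eq_sum_of_support_subset subset_union_right, ← sum_add_distrib]
  exact sum_le_sum fun n _ => (coeff_add p q n).symm ▸ norm_add_le _ _

theorem sumNormCoeff_sub_le (p q : R[X]) :
    (p - q).sumNormCoeff ≤ p.sumNormCoeff + q.sumNormCoeff := by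
  simpa [sub_eq_add_neg] using sumNormCoeff_add_le p (-q)

theorem sumNormCoeff_sum_le {ι : Type*} (s : Finset ι) (f : ι → R[X]) :
    (∑ i ∈ s, f i).sumNormCoeff ≤ ∑ i ∈ s, (f i).sumNormCoeff :=
  le_sum_of_subadditive _ sumNormCoeff_zero.le sumNormCoeff_add_le s f

theorem sumNormCoeff_mul_le (p q : R[X]) :
    (p * q).sumNormCoeff ≤ p.sumNormCoeff * q.sumNormCoeff := by
  rw [mul_eq_sum_sum]
  refine (sumNormCoeff_sum_le _ _).trans ?_
  rw [sumNormCoeff, sumNormCoeff, sum_def, sum_def, sum_mul_sum]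
  refine sum_le_sum fun i _ => (sumNormCoeff_sum_le _ _).trans (sum_le_sum fun j _ => ?_)
  rw [sumNormCoeff_monomial]
  exact norm_mul_le _ _

theorem sumNormCoeff_units_smul (u : ℤˣ) (p : R[X]) : (u • p).sumNormCoeff = p.sumNormCoeff := by
  rcases Int.units_eq_one_or u with rfl | rfl <;> simp

end SeminormedRing

section NormOneClass

variable {R : Type*} [SeminormedRing R] [NormOneClass R]

@[simp]
theorem sumNormCoeff_one : (1 : R[X]).sumNormCoeff = 1 := by
  rw [← C_1, sumNormCoeff_C, norm_one]

@[simp]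
theorem sumNormCoeff_X : (X : R[X]).sumNormCoeff = 1 := by
  rw [← monomial_one_one_eq_X, sumNormCoeff_monomial, norm_one]

end NormOneClass

section SeminormedCommRing

variable {R : Type*} [SeminormedCommRing R] [NormOneClass R]

theorem sumNormCoeff_prod_le {ι : Type*} (s : Finset ι) (f : ι → R[X]) :
    (∏ i ∈ s, f i).sumNormCoeff ≤ ∏ i ∈ s, (f i).sumNormCoeff := by
  classical
  induction s using Finset.induction_on with
  | empty => simp
  | insert a s ha ih =>
    rw [prod_insert ha, prod_insert ha]
    exact (sumNormCoeff_mul_le _ _).trans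
      (mul_le_mul_of_nonneg_left ih (sumNormCoeff_nonneg _))

theorem sumNormCoeff_det_le {n : Type*} [Fintype n] [DecidableEq n] (M : Matrix n n R[X]) :
    M.det.sumNormCoeff ≤ ∏ i, ∑ j, (M i j).sumNormCoeff := by
  rw [← det_transpose, det_apply, Fintype.prod_sum]
  calc _ ≤ ∑ σ : Equiv.Perm n, ∏ i, (M i (σ i)).sumNormCoeff :=
        (sumNormCoeff_sum_le _ _).trans <| sum_le_sum fun σ _ => by
          rw [sumNormCoeff_units_smul]; exact sumNormCoeff_prod_le _ _
    _ = ∑ f ∈ univ.image fun σ : Equiv.Perm n => (σ : n → n), ∏ i, (M i (f i)).sumNormCoeff :=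
        by rw [sum_image fun σ _ τ _ h => Equiv.ext (congrFun h)]
    _ ≤ _ := sum_le_sum_of_subset_of_nonneg (subset_univ _) fun _ _ _ =>
        prod_nonneg fun _ _ => sumNormCoeff_nonneg _

end SeminormedCommRing

@[simp]
theorem sumNormCoeff_intCast (z : ℤ) : (z : ℤ[X]).sumNormCoeff = |(z : ℝ)| := by
  rw [← C_eq_intCast, Int.cast_id, sumNormCoeff_C, Int.norm_eq_abs]

@[simp]
theorem sumNormCoeff_natCast (n : ℕ) : (n : ℤ[X]).sumNormCoeff = n := by
  exact_mod_cast sumNormCoeff_intCast n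


theorem one_le_abs_mul_sumNormCoeff_of_aeval_eq_zero {p : ℤ[X]} (hp : p ≠ 0) {x : ℝ}
    (hx₀ : x ≠ 0) (hx₁ : |x| ≤ 1) (hroot : aeval x p = 0) : 1 ≤ |x| * p.sumNormCoeff := by
  set t := p.natTrailingDegree
  have ht : t ∈ p.support := natTrailingDegree_mem_support_of_nonzero hp
  have hsplit : (p.coeff t : ℝ) * x ^ t = -∑ k ∈ p.support.erase t, (p.coeff k : ℝ) * x ^ k := by
    rw [aeval_def, eval₂_eq_sum, sum_def, ← add_sum_erase _ _ ht] at hroot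
    simpa [eq_neg_iff_add_eq_zero] using hroot
  have htail : |x| ^ t * |(p.coeff t : ℝ)| ≤ |x| ^ t * (|x| * p.sumNormCoeff) := by
    calc |x| ^ t * |(p.coeff t : ℝ)| = |∑ k ∈ p.support.erase t, (p.coeff k : ℝ) * x ^ k| := by
          rw [← abs_pow, ← abs_mul, mul_comm, hsplit, abs_neg]
      _ ≤ ∑ k ∈ p.support.erase t, |(p.coeff k : ℝ)| * |x| ^ (t + 1) := by
          refine (abs_sum_le_sum_abs _ _).trans (sum_le_sum fun k hk => ?_)
          obtain ⟨hkt, hk⟩ := mem_erase.mp hk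
          rw [abs_mul, abs_pow]
          exact mul_le_mul_of_nonneg_left
            (pow_le_pow_of_le_one (abs_nonneg x) hx₁
              (lt_of_le_of_ne (natTrailingDegree_le_of_mem_supp k hk) (Ne.symm hkt)))
            (abs_nonneg _)
      _ ≤ ∑ k ∈ p.support, |(p.coeff k : ℝ)| * |x| ^ (t + 1) :=
          sum_le_sum_of_subset_of_nonneg (erase_subset _ _) fun _ _ _ => by positivity
      _ = |x| ^ t * (|x| * p.sumNormCoeff) := by
          simp_rw [sumNormCoeff, sum_def, mul_sum, Int.norm_eq_abs]
          exact sum_congr rfl fun _ _ => by ring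
  have hcoeff : (1 : ℝ) ≤ |(p.coeff t : ℝ)| := by
    rw [← Int.cast_abs]
    exact_mod_cast Int.one_le_abs (mem_support_iff.mp ht)
  exact hcoeff.trans (le_of_mul_le_mul_left htail (by positivity))

end Polynomial

section Policy

variable {S : Type*} [Fintype S] [DecidableEq S]

theorem det_smul_one_sub_smul_ne_zero {B : Matrix S S ℝ} {c γ : ℝ} (hB : ∀ i j, 0 ≤ B i j)
    (hrow : ∀ i, ∑ j, B i j = c) (hc : 0 < c) (hγ₀ : 0 ≤ γ) (hγ₁ : γ < 1) :
    (c • 1 - γ • B).det ≠ 0 := by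
  refine det_ne_zero_of_sum_row_lt_diag fun k => ?_
  have hkk : B k k ≤ c := hrow k ▸ single_le_sum (fun j _ => hB k j) (mem_univ k)
  have hoff : ∑ j ∈ univ.erase k, ‖(c • 1 - γ • B) k j‖ = γ * (c - B k k) := by
    rw [← hrow k, ← sum_erase_add _ _ (mem_univ k), add_sub_cancel_right, mul_sum]
    refine sum_congr rfl fun j hj => ?_
    simp [one_apply_ne' (ne_of_mem_erase hj), abs_of_nonneg (hB k j), hγ₀, abs_of_nonneg]
  have hdiag : ‖(c • 1 - γ • B) k k‖ = c - γ * B k k := by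
    simp only [Matrix.sub_apply, Matrix.smul_apply, one_apply_eq, smul_eq_mul, mul_one,
      Real.norm_eq_abs]
    exact abs_of_nonneg (by linarith [mul_le_of_le_one_left (hB k k) hγ₁.le])
  rw [hoff, hdiag]
  linarith [mul_lt_mul_of_pos_right hγ₁ hc]

variable (m : ℕ) (K : Matrix S S ℕ)

/-- Evaluated at `γ - 1`, with `K = m • P_π`, this is `m • (1 - γ • P_π)`. -/
noncomputable def policyPolyMatrix : Matrix S S ℤ[X] :=
  (m : ℤ[X]) • 1 - (1 + X : ℤ[X]) • K.map (fun k => (k : ℤ[X]))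

theorem mapMatrix_aeval_policyPolyMatrix (x : ℝ) :
    (aeval x).mapMatrix (policyPolyMatrix m K) =
      (m : ℝ) • 1 - (1 + x) • K.map (fun k => (k : ℝ)) := by
  ext a b
  by_cases h : a = b <;> simp [policyPolyMatrix, h]

theorem sum_sumNormCoeff_policyPolyMatrix_le (hK : ∀ a, ∑ b, K a b = m) (a : S) :
    ∑ b, (policyPolyMatrix m K a b).sumNormCoeff ≤ 3 * m := by
  have hentry : ∀ b, (policyPolyMatrix m K a b).sumNormCoeff ≤
      (if a = b then (m : ℝ) else 0) + 2 * K a b := by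
    intro b
    have h1X : (1 + X : ℤ[X]).sumNormCoeff ≤ 2 := by
      linarith [sumNormCoeff_add_le (1 : ℤ[X]) X, sumNormCoeff_one (R := ℤ),
        sumNormCoeff_X (R := ℤ)]
    have hKX : ((1 + X) * (K a b : ℤ[X])).sumNormCoeff ≤ 2 * (K a b : ℝ) :=
      (sumNormCoeff_mul_le _ _).trans <| by
        rw [sumNormCoeff_natCast]; exact mul_le_mul_of_nonneg_right h1X (Nat.cast_nonneg _)
    simp only [policyPolyMatrix, Matrix.sub_apply, Matrix.smul_apply, Matrix.map_apply,
      smul_eq_mul]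
    refine (sumNormCoeff_sub_le _ _).trans (add_le_add ?_ hKX)
    by_cases h : a = b <;> simp [h, one_apply]
  calc _ ≤ ∑ b, ((if a = b then (m : ℝ) else 0) + 2 * K a b) := sum_le_sum fun b _ => hentry b
    _ = 3 * m := by
      rw [sum_add_distrib, sum_ite_eq, if_pos (mem_univ a), ← mul_sum]
      exact_mod_cast (by rw [hK a]; ring : m + 2 * ∑ b, K a b = 3 * m)

theorem sumNormCoeff_det_policyPolyMatrix_le (hK : ∀ a, ∑ b, K a b = m) :
    (policyPolyMatrix m K).det.sumNormCoeff ≤ (3 * m : ℝ) ^ Fintype.card S := by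
  refine (sumNormCoeff_det_le _).trans ?_
  rw [← card_univ, ← prod_const]
  exact prod_le_prod (fun _ _ => sum_nonneg fun _ _ => sumNormCoeff_nonneg _)
    fun a _ => sum_sumNormCoeff_policyPolyMatrix_le m K hK a

theorem sumNormCoeff_adjugate_policyPolyMatrix_le (hK : ∀ a, ∑ b, K a b = m) (i j : S) :
    ((policyPolyMatrix m K).adjugate i j).sumNormCoeff ≤ (3 * m : ℝ) ^ (Fintype.card S - 1) := by
  rw [adjugate_apply]
  refine (sumNormCoeff_det_le _).trans ?_
  rw [← mul_prod_erase _ _ (mem_univ j), updateRow_self]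
  have hsingle : ∑ b, sumNormCoeff ((Pi.single i 1 : S → ℤ[X]) b) = 1 := by
    simp [Pi.single_apply, apply_ite sumNormCoeff]
  rw [hsingle, one_mul, ← card_univ, ← card_erase_of_mem (mem_univ j), ← prod_const]
  refine prod_le_prod (fun _ _ => sum_nonneg fun _ _ => sumNormCoeff_nonneg _) fun a ha => ?_
  rw [updateRow_ne (ne_of_mem_erase ha)]
  exact sum_sumNormCoeff_policyPolyMatrix_le m K hK a

theorem sumNormCoeff_adjugate_policyPolyMatrix_mulVec_le (hK : ∀ a, ∑ b, K a b = m)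
    {q : S → ℤ} {rinf : ℕ} (hq : ∀ b, |q b| ≤ rinf) (s : S) :
    (((policyPolyMatrix m K).adjugate *ᵥ fun b => (q b : ℤ[X])) s).sumNormCoeff ≤
      Fintype.card S * rinf * (3 * m : ℝ) ^ (Fintype.card S - 1) := by
  calc _ ≤ ∑ b, ((policyPolyMatrix m K).adjugate s b * (q b : ℤ[X])).sumNormCoeff :=
        sumNormCoeff_sum_le _ _
    _ ≤ ∑ _b : S, (3 * m : ℝ) ^ (Fintype.card S - 1) * rinf :=
        sum_le_sum fun b _ => (sumNormCoeff_mul_le _ _).trans <| by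
          rw [sumNormCoeff_intCast]
          exact mul_le_mul (sumNormCoeff_adjugate_policyPolyMatrix_le m K hK s b)
            (by rw [← Int.cast_abs]; exact_mod_cast hq b) (abs_nonneg _) (by positivity)
    _ = _ := by rw [sum_const, card_univ, nsmul_eq_mul]; ring

theorem aeval_det_policyPolyMatrix_ne_zero (hK : ∀ a, ∑ b, K a b = m) (hm : m ≠ 0) {γ : ℝ}
    (hγ₀ : 0 ≤ γ) (hγ₁ : γ < 1) : aeval (γ - 1) (policyPolyMatrix m K).det ≠ 0 := by
  rw [AlgHom.map_det, mapMatrix_aeval_policyPolyMatrix, add_sub_cancel]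
  exact det_smul_one_sub_smul_ne_zero (fun _ _ => Nat.cast_nonneg _)
    (fun a => by simpa using congrArg (Nat.cast : ℕ → ℝ) (hK a)) (by positivity) hγ₀ hγ₁

theorem aeval_det_policyPolyMatrix_mul_inv_mulVec (hK : ∀ a, ∑ b, K a b = m) (hm : m ≠ 0)
    {Q : Matrix S S ℝ} (hQ : ∀ a b, (K a b : ℝ) = m * Q a b) {q : S → ℤ} {w : S → ℝ}
    (hw : ∀ b, (q b : ℝ) = m * w b) {γ : ℝ} (hγ₀ : 0 ≤ γ) (hγ₁ : γ < 1) (s : S) :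
    aeval (γ - 1) (policyPolyMatrix m K).det * ((1 - γ • Q)⁻¹ *ᵥ w) s =
      aeval (γ - 1) (((policyPolyMatrix m K).adjugate *ᵥ fun b => (q b : ℤ[X])) s) := by
  have hA : (aeval (γ - 1)).mapMatrix (policyPolyMatrix m K) = (m : ℝ) • (1 - γ • Q) := by
    rw [mapMatrix_aeval_policyPolyMatrix, add_sub_cancel]
    ext a b
    by_cases h : a = b <;> simp [h, hQ, mul_sub, mul_left_comm]
  set A := (aeval (γ - 1)).mapMatrix (policyPolyMatrix m K)
  have hdet : A.det ≠ 0 := by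
    rw [← AlgHom.map_det]; exact aeval_det_policyPolyMatrix_ne_zero m K hK hm hγ₀ hγ₁
  have hunit : IsUnit (1 - γ • Q).det := by
    rw [hA, det_smul] at hdet
    exact (right_ne_zero_of_mul hdet).isUnit
  have hAv : A *ᵥ ((1 - γ • Q)⁻¹ *ᵥ w) = fun b => (q b : ℝ) := by
    rw [mulVec_mulVec, hA, smul_mul_assoc, mul_nonsing_inv _ hunit, smul_mulVec, one_mulVec]
    ext b; simp [hw]
  calc _ = (A.det • ((1 - γ • Q)⁻¹ *ᵥ w)) s := by rw [AlgHom.map_det]; rfl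
    _ = (A.adjugate *ᵥ (A *ᵥ ((1 - γ • Q)⁻¹ *ᵥ w))) s := by
        rw [mulVec_mulVec, adjugate_mul, smul_mulVec, one_mulVec]
    _ = _ := by
        rw [hAv, ← AlgHom.map_adjugate]
        simp [mulVec, dotProduct, AlgHom.mapMatrix_apply]

end Policy
theorem exists_aeval_det_mul_valueFn_eq {S A : Type*} [Fintype S] [DecidableEq S]
    {r : S → A → ℝ} {P : S → A → S → ℝ} {m rinf : ℕ} (hm : 1 ≤ m)
    (hP : ∀ s a s', ∃ k : ℕ, k ≤ m ∧ P s a s' = (k : ℝ) / m)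
    (hP1 : ∀ s a, ∑ s', P s a s' = 1)
    (hr : ∀ s a, ∃ q : ℤ, r s a = (q : ℝ) / m ∧ |q| ≤ (rinf : ℤ)) (π : S → A) (s : S) :
    ∃ d a : ℤ[X], d.sumNormCoeff ≤ (3 * m : ℝ) ^ Fintype.card S ∧
      a.sumNormCoeff ≤ Fintype.card S * rinf * (3 * m : ℝ) ^ (Fintype.card S - 1) ∧
      ∀ γ : ℝ, 0 ≤ γ → γ < 1 →
        aeval (γ - 1) d ≠ 0 ∧ aeval (γ - 1) d * valueFn r P π γ s = aeval (γ - 1) a := by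
  choose k _ hk using hP
  choose q hq hq_le using hr
  have hm0 : (m : ℝ) ≠ 0 := by positivity
  set K : Matrix S S ℕ := Matrix.of fun a b => k a (π a) b
  have hKQ : ∀ a b, (K a b : ℝ) = m * policyMatrix P π a b := fun a b => by
    simp [K, policyMatrix, hk, mul_div_cancel₀ _ hm0]
  have hK : ∀ a, ∑ b, K a b = m := fun a => by
    have := hP1 a (π a)
    simp only [hk, ← sum_div, div_eq_one_iff_eq hm0] at this
    exact_mod_cast this
  have hw : ∀ b, (q b (π b) : ℝ) = m * policyReward r π b := fun b => by
    simp [policyReward, hq, mul_div_cancel₀ _ hm0]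
  exact ⟨_, _, sumNormCoeff_det_policyPolyMatrix_le m K hK,
    sumNormCoeff_adjugate_policyPolyMatrix_mulVec_le m K hK (fun b => hq_le b (π b)) s,
    fun γ h₀ h₁ => ⟨aeval_det_policyPolyMatrix_ne_zero m K hK (by omega) h₀ h₁,
      aeval_det_policyPolyMatrix_mul_inv_mulVec m K hK (by omega) hKQ hw h₀ h₁ s⟩⟩

theorem exists_ne_zero_aeval_sub_one_eq_zero_of_valueFn_eq {S A : Type*} [Fintype S]
    [DecidableEq S] {r : S → A → ℝ} {P : S → A → S → ℝ} {m rinf : ℕ} (hm : 1 ≤ m)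
    (hP : ∀ s a s', ∃ k : ℕ, k ≤ m ∧ P s a s' = (k : ℝ) / m)
    (hP1 : ∀ s a, ∑ s', P s a s' = 1)
    (hr : ∀ s a, ∃ q : ℤ, r s a = (q : ℝ) / m ∧ |q| ≤ (rinf : ℤ)) (π π' : S → A) (s : S)
    (hne : ¬ ∀ γ : ℝ, 0 ≤ γ → γ < 1 → valueFn r P π γ s = valueFn r P π' γ s) :
    ∃ g : ℤ[X], g ≠ 0 ∧
      g.sumNormCoeff ≤ 2 * (Fintype.card S * rinf * (3 * m : ℝ) ^ (2 * Fintype.card S - 1)) ∧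
      ∀ γ : ℝ, 0 ≤ γ → γ < 1 → valueFn r P π γ s = valueFn r P π' γ s →
        aeval (γ - 1) g = 0 := by
  obtain ⟨d₁, a₁, hd₁, ha₁, h₁⟩ := exists_aeval_det_mul_valueFn_eq hm hP hP1 hr π s
  obtain ⟨d₂, a₂, hd₂, ha₂, h₂⟩ := exists_aeval_det_mul_valueFn_eq hm hP hP1 hr π' s
  have hg : ∀ γ, 0 ≤ γ → γ < 1 → aeval (γ - 1) (a₁ * d₂ - a₂ * d₁) =
      aeval (γ - 1) d₁ * aeval (γ - 1) d₂ * (valueFn r P π γ s - valueFn r P π' γ s) :=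
    fun γ hγ₀ hγ₁ => by
      rw [map_sub, map_mul, map_mul, ← (h₁ γ hγ₀ hγ₁).2, ← (h₂ γ hγ₀ hγ₁).2]; ring
  refine ⟨a₁ * d₂ - a₂ * d₁, fun hg0 => hne fun γ hγ₀ hγ₁ => ?_, ?_,
    fun γ hγ₀ hγ₁ heq => by rw [hg γ hγ₀ hγ₁, heq, sub_self, mul_zero]⟩
  · have := hg γ hγ₀ hγ₁
    rw [hg0, map_zero, eq_comm, mul_eq_zero, sub_eq_zero] at this
    exact this.resolve_left (mul_ne_zero (h₁ γ hγ₀ hγ₁).1 (h₂ γ hγ₀ hγ₁).1)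
  · have hn : 1 ≤ Fintype.card S := Fintype.card_pos_iff.mpr ⟨s⟩
    calc _ ≤ a₁.sumNormCoeff * d₂.sumNormCoeff + a₂.sumNormCoeff * d₁.sumNormCoeff :=
          (sumNormCoeff_sub_le _ _).trans
            (add_le_add (sumNormCoeff_mul_le _ _) (sumNormCoeff_mul_le _ _))
      _ ≤ Fintype.card S * rinf * (3 * m : ℝ) ^ (Fintype.card S - 1) *
              (3 * m : ℝ) ^ Fintype.card S +
            Fintype.card S * rinf * (3 * m : ℝ) ^ (Fintype.card S - 1) *
              (3 * m : ℝ) ^ Fintype.card S :=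
          add_le_add
            (mul_le_mul ha₁ hd₂ (sumNormCoeff_nonneg _) ((sumNormCoeff_nonneg _).trans ha₁))
            (mul_le_mul ha₂ hd₁ (sumNormCoeff_nonneg _) ((sumNormCoeff_nonneg _).trans ha₂))
      _ = _ := by
          rw [mul_assoc _ (_ ^ _), ← pow_add, show Fintype.card S - 1 + Fintype.card S =
            2 * Fintype.card S - 1 by omega]
          ring

theorem card_mul_mul_pow_le_pow {n N : ℕ} (hn : 1 ≤ n) (hN : 1 ≤ N) (rinf m : ℕ) :
    n * rinf * (3 * m) ^ N ≤ (2 * n * rinf * m ^ (2 * n) * 4 ^ n) ^ N := by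
  have h3m : 3 * m ≤ 4 ^ n * m ^ (2 * n) :=
    Nat.mul_le_mul (le_self_pow₀ (by norm_num) (by omega) |>.trans' (by norm_num))
      (Nat.le_self_pow (by omega) m)
  calc n * rinf * (3 * m) ^ N ≤ (2 * n) ^ N * rinf ^ N * (4 ^ n * m ^ (2 * n)) ^ N :=
        Nat.mul_le_mul (Nat.mul_le_mul ((Nat.le_mul_of_pos_left n two_pos).trans
          (Nat.le_self_pow (by omega) _)) (Nat.le_self_pow (by omega) _))
          (Nat.pow_le_pow_left h3m N)
    _ = _ := by rw [← mul_pow, ← mul_pow]; ring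

theorem two_mul_lt_two_mul_rpow_mul_pow {N : ℕ} (hN : 1 ≤ N) {x L : ℝ} (hL : 0 ≤ L)
    (hx : x ≤ L ^ N) : 2 * x < 2 * (N : ℝ) ^ ((N : ℝ) / 2 + 2) * (L + 1) ^ N := by
  have hrpow : 1 ≤ (N : ℝ) ^ ((N : ℝ) / 2 + 2) :=
    Real.one_le_rpow (by exact_mod_cast hN) (by positivity)
  have hpow : L ^ N < (L + 1) ^ N := pow_lt_pow_left₀ (by linarith) hL (by omega)
  nlinarith [pow_pos (by linarith : (0 : ℝ) < L + 1) N]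

theorem crossing_points_lt_one_sub_eta_general {S A : Type*} [Fintype S] [DecidableEq S]
    (r : S → A → ℝ) (P : S → A → S → ℝ) (m rinf : ℕ) (hm : 1 ≤ m)
    (hP : ∀ s a s', ∃ k : ℕ, k ≤ m ∧ P s a s' = (k : ℝ) / m)
    (hP1 : ∀ s a, ∑ s', P s a s' = 1)
    (hr : ∀ s a, ∃ q : ℤ, r s a = (q : ℝ) / m ∧ |q| ≤ (rinf : ℤ))
    (π π' : S → A) (s : S)
    (hnotzero : ¬ ∀ γ : ℝ, 0 ≤ γ → γ < 1 → valueFn r P π γ s = valueFn r P π' γ s)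
    (N : ℕ) (hNdef : N = 2 * Fintype.card S - 1)
    (L : ℝ)
    (hLdef : L = 2 * Fintype.card S * rinf *
      (m : ℝ) ^ (2 * Fintype.card S) * 4 ^ Fintype.card S)
    (η : ℝ) (hηdef : η = 1 / (2 * (N : ℝ) ^ ((N : ℝ) / 2 + 2) * (L + 1) ^ N)) :
    ∀ γhat : ℝ, 0 ≤ γhat → γhat < 1 →
      valueFn r P π γhat s = valueFn r P π' γhat s → γhat < 1 - η := by
  intro γ hγ₀ hγ₁ heq
  obtain ⟨g, hg0, hgnorm, hroot⟩ :=
    exists_ne_zero_aeval_sub_one_eq_zero_of_valueFn_eq hm hP hP1 hr π π' s hnotzero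
  have hn : 1 ≤ Fintype.card S := Fintype.card_pos_iff.mpr ⟨s⟩
  have hN : 1 ≤ N := by omega
  have hgap := one_le_abs_mul_sumNormCoeff_of_aeval_eq_zero hg0 (sub_ne_zero.mpr hγ₁.ne)
    (abs_le.mpr ⟨by linarith, by linarith⟩) (hroot γ hγ₀ hγ₁ heq)
  rw [abs_of_neg (by linarith), neg_sub] at hgap
  rw [← hNdef] at hgnorm
  have hbound : g.sumNormCoeff < 2 * (N : ℝ) ^ ((N : ℝ) / 2 + 2) * (L + 1) ^ N :=
    hgnorm.trans_lt <| two_mul_lt_two_mul_rpow_mul_pow hN (by rw [hLdef]; positivity) <| by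
      rw [hLdef]; exact_mod_cast card_mul_mul_pow_le_pow hn hN rinf m
  have hpos : 0 < 2 * (N : ℝ) ^ ((N : ℝ) / 2 + 2) * (L + 1) ^ N :=
    (sumNormCoeff_nonneg g).trans_lt hbound
  have hη : η < 1 - γ := by
    rw [hηdef, div_lt_iff₀ hpos]
    nlinarith [sumNormCoeff_nonneg g]
  linarith

/-- Under Assumption R, if `γ ↦ v^π_{γ,s} - v^{π'}_{γ,s}` is not identically zero on
`[0,1)`, then every `γ̂ ∈ [0,1)` with `v^π_{γ̂,s} = v^{π'}_{γ̂,s}` satisfies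
`γ̂ < 1 - η(M)`, where `N = 2|S| - 1`, `L = 2 |S| r∞ m^{2|S|} 4^{|S|}` and
`η(M) = 1 / (2 N^{N/2+2} (L+1)^N)`. -/
theorem crossing_points_lt_one_sub_eta {S A : Type*} [Fintype S] [DecidableEq S]
    [Nonempty S] [Fintype A] [Nonempty A]
    (r : S → A → ℝ) (P : S → A → S → ℝ) (m rinf : ℕ) (hm : 1 ≤ m)
    (hP : ∀ s a s', ∃ k : ℕ, k ≤ m ∧ P s a s' = (k : ℝ) / m)
    (hP0 : ∀ s a s', 0 ≤ P s a s') (hP1 : ∀ s a, ∑ s', P s a s' = 1)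
    (hr : ∀ s a, ∃ q : ℤ, r s a = (q : ℝ) / m ∧ |q| ≤ (rinf : ℤ))
    (π π' : S → A) (s : S)
    (hnotzero : ¬ ∀ γ : ℝ, 0 ≤ γ → γ < 1 → valueFn r P π γ s = valueFn r P π' γ s)
    (N : ℕ) (hNdef : N = 2 * Fintype.card S - 1)
    (L : ℝ)
    (hLdef : L = 2 * Fintype.card S * rinf *
      (m : ℝ) ^ (2 * Fintype.card S) * 4 ^ Fintype.card S)
    (η : ℝ) (hηdef : η = 1 / (2 * (N : ℝ) ^ ((N : ℝ) / 2 + 2) * (L + 1) ^ N)) :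
    ∀ γhat : ℝ, 0 ≤ γhat → γhat < 1 →
      valueFn r P π γhat s = valueFn r P π' γhat s → γhat < 1 - η :=
  crossing_points_lt_one_sub_eta_general r P m rinf hm hP hP1 hr π π' s hnotzero N hNdef L hLdef η
    hηdef
end

section
/- Let S be a nonempty finite set, m ∈ ℕ with m ≥ 1, β ∈ ℕ, and let p⁰ ∈ Δ(S) satisfy m·p⁰(s) ∈ ℕ for every s ∈ S. Set α = β/m and define U = {p ∈ Δ(S) : |p(s) − p⁰(s)| ≤ α for all s ∈ S} (the ℓ∞-ball of radius α around p⁰ intersected with the simplex). Then every extreme point q of the convex set U satisfies m·q(s) ∈ ℤ for every s ∈ S. -/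
/-! If `m q(s)` were not an integer for some `s`, then, since `∑ m q = m` is an integer, it would
also fail for a second coordinate `t`. Neither coordinate can lie on a face of `U`, where `q(u)` is
`0` or `p⁰(u) ± β/m`, both in `ℤ/m`. So moving mass between `s` and `t` in both directions stays
in `U`, and `q` is the midpoint of a nondegenerate segment in `U`. -/

open Filter Topology

theorem AddSubgroup.exists_ne_notMem_of_sum_mem {ι G : Type*} [Fintype ι] [AddCommGroup G]
    (H : AddSubgroup G) {f : ι → G} (hsum : ∑ j, f j ∈ H) {i : ι} (hi : f i ∉ H) :
    ∃ j ≠ i, f j ∉ H := by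
  classical
  by_contra! h
  rw [← Finset.add_sum_erase _ _ (Finset.mem_univ i)] at hsum
  have hrest : ∑ j ∈ Finset.univ.erase i, f j ∈ H :=
    H.sum_mem fun j hj => h j (Finset.ne_of_mem_erase hj)
  exact hi (by simpa using H.sub_mem hsum hrest)

theorem notMem_extremePoints_of_add_mem_of_sub_mem {𝕜 E : Type*} [Field 𝕜] [LinearOrder 𝕜]
    [IsStrictOrderedRing 𝕜] [AddCommGroup E] [Module 𝕜 E] {A : Set E} {x d : E} (hd : d ≠ 0)
    (hadd : x + d ∈ A) (hsub : x - d ∈ A) : x ∉ A.extremePoints 𝕜 := by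
  intro hx
  have hmid : x ∈ openSegment 𝕜 (x + d) (x - d) :=
    ⟨1 / 2, 1 / 2, by norm_num, by norm_num, by norm_num, by module⟩
  exact hd (by simpa using hx.2 hadd hsub hmid)

theorem notMem_extremePoints_of_mem_nhds_of_mem_nhds {S : Type*} [Fintype S] {c : ℝ}
    {K : S → Set ℝ} {q : S → ℝ} {s t : S} (hst : s ≠ t) (hs : K s ∈ 𝓝 (q s))
    (ht : K t ∈ 𝓝 (q t)) : q ∉ Set.extremePoints ℝ {p | ∑ u, p u = c ∧ ∀ u, p u ∈ K u} := by
  classical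
  intro hq
  obtain ⟨hqsum, hqK⟩ := hq.1
  set d : S → ℝ := Pi.single s 1 - Pi.single t 1
  have hds : d s = 1 := by simp [d, hst]
  have hdsum : ∑ u, d u = 0 := by simp [d, Finset.sum_sub_distrib]
  have hnear : ∀ᶠ δ in 𝓝 (0 : ℝ), q + δ • d ∈ {p | ∑ u, p u = c ∧ ∀ u, p u ∈ K u} := by
    refine Eventually.and (Eventually.of_forall fun δ => ?_) (eventually_all.2 fun u => ?_)
    · simp [Finset.sum_add_distrib, ← Finset.mul_sum, hdsum, hqsum]
    by_cases hdu : d u = 0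
    · simp [hdu, hqK u]
    have hKu : K u ∈ 𝓝 (q u) := by
      by_cases hus : u = s
      · exact hus ▸ hs
      · by_cases hut : u = t
        · exact hut ▸ ht
        · simp [d, hus, hut] at hdu
    have hcont : Tendsto (fun δ : ℝ => q u + δ * d u) (𝓝 0) (𝓝 (q u)) := by
      simpa using (by fun_prop : Continuous fun δ : ℝ => q u + δ * d u).tendsto 0
    exact hcont hKu
  have hneg : ∀ᶠ δ in 𝓝 (0 : ℝ), q + (-δ) • d ∈ {p | ∑ u, p u = c ∧ ∀ u, p u ∈ K u} := by
    simpa using (continuous_neg.tendsto' (0 : ℝ) 0 neg_zero).eventually hnear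
  obtain ⟨δ, ⟨hadd, hsub⟩, hδ⟩ :=
    ((hnear.and hneg).filter_mono nhdsWithin_le_nhds |>.and self_mem_nhdsWithin).exists
      (f := 𝓝[≠] (0 : ℝ))
  refine notMem_extremePoints_of_add_mem_of_sub_mem (d := δ • d) ?_ hadd ?_ hq
  · exact fun h => hδ (by simpa [hds] using congrFun h s)
  · simpa [neg_smul, ← sub_eq_add_neg] using hsub

theorem exists_int_mul_eq_of_abs_sub_eq {m x a r : ℝ} (ha : ∃ k : ℤ, m * a = k)
    (hr : ∃ b : ℤ, m * r = b) (h : |x - a| = r) : ∃ z : ℤ, m * x = z := by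
  obtain ⟨k, hk⟩ := ha
  obtain ⟨b, hb⟩ := hr
  rcases eq_or_eq_neg_of_abs_eq h with h | h
  · exact ⟨k + b, by push_cast; linear_combination m * h + hk + hb⟩
  · exact ⟨k - b, by push_cast; linear_combination m * h + hk - hb⟩

theorem nonneg_abs_sub_le_mem_nhds {x a r : ℝ} (hx : 0 < x) (hr : |x - a| < r) :
    {y | 0 ≤ y ∧ |y - a| ≤ r} ∈ 𝓝 x := by
  obtain ⟨hlt, hgt⟩ := abs_sub_lt_iff.1 hr
  filter_upwards [Ioi_mem_nhds hx, Ioo_mem_nhds (by linarith : a - r < x) (by linarith : x < a + r)]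
    with y hy0 hy
  exact ⟨le_of_lt hy0, abs_sub_le_iff.2 ⟨by linarith [hy.2], by linarith [hy.1]⟩⟩

theorem nonneg_abs_sub_le_mem_nhds_of_not_int {m x a r : ℝ} (ha : ∃ k : ℤ, m * a = k)
    (hr : ∃ b : ℤ, m * r = b) (hx : 0 ≤ x ∧ |x - a| ≤ r) (hmx : ¬∃ z : ℤ, m * x = z) :
    {y | 0 ≤ y ∧ |y - a| ≤ r} ∈ 𝓝 x :=
  nonneg_abs_sub_le_mem_nhds (hx.1.lt_of_ne fun h => hmx ⟨0, by simp [← h]⟩)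
    (hx.2.lt_of_ne fun h => hmx (exists_int_mul_eq_of_abs_sub_eq ha hr h))

theorem extreme_points_linfty_ball_rational_general
    {S : Type*} [Fintype S]
    (m : ℕ) (hm : 1 ≤ m) (β : ℕ)
    (p0 : S → ℝ)
    (hp0rat : ∀ s, ∃ k : ℕ, (m : ℝ) * p0 s = k) :
    ∀ q ∈ Set.extremePoints ℝ
        {p : S → ℝ | (∀ s, 0 ≤ p s) ∧ (∑ s, p s = 1) ∧
          ∀ s, |p s - p0 s| ≤ (β : ℝ) / m},
      ∀ s : S, ∃ z : ℤ, (m : ℝ) * q s = z := by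
  intro q hq s
  set K : S → Set ℝ := fun u => {x | 0 ≤ x ∧ |x - p0 u| ≤ β / m}
  have hU : {p : S → ℝ | (∀ s, 0 ≤ p s) ∧ (∑ s, p s = 1) ∧ ∀ s, |p s - p0 s| ≤ (β : ℝ) / m} =
      {p | ∑ u, p u = 1 ∧ ∀ u, p u ∈ K u} := by
    ext p
    simp only [Set.mem_ofPred_eq, K, forall_and]
    tauto
  rw [hU] at hq
  set I := (Int.castAddHom ℝ).range
  have hI : ∀ x : ℝ, x ∈ I ↔ ∃ z : ℤ, x = z := fun x => by
    simp only [I, AddMonoidHom.mem_range, Int.coe_castAddHom, eq_comm]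
  have hnhds : ∀ u, m * q u ∉ I → K u ∈ 𝓝 (q u) := fun u hu =>
    have ⟨k, hk⟩ := hp0rat u
    nonneg_abs_sub_le_mem_nhds_of_not_int ⟨k, by simp [hk]⟩ ⟨β, by field_simp; simp⟩
      (hq.1.2 u) ((hI _).not.1 hu)
  rw [← hI]
  by_contra hs
  have hsum : ∑ u, (m : ℝ) * q u ∈ I := by
    rw [← Finset.mul_sum, hq.1.1, mul_one, hI]
    exact ⟨m, by simp⟩
  obtain ⟨t, hts, ht⟩ := I.exists_ne_notMem_of_sum_mem hsum hs
  exact notMem_extremePoints_of_mem_nhds_of_mem_nhds hts.symm (hnhds s hs) (hnhds t ht) hq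

/-- Extreme points of the `ℓ∞`-ball of radius `β/m` around a rational point `p⁰` of the
simplex, intersected with the simplex, have coordinates that are integer multiples of
`1/m`. -/
theorem extreme_points_linfty_ball_rational
    {S : Type*} [Fintype S] [Nonempty S]
    (m : ℕ) (hm : 1 ≤ m) (β : ℕ)
    (p0 : S → ℝ) (hp0nonneg : ∀ s, 0 ≤ p0 s) (hp0sum : ∑ s, p0 s = 1)
    (hp0rat : ∀ s, ∃ k : ℕ, (m : ℝ) * p0 s = k) :
    ∀ q ∈ Set.extremePoints ℝ
        {p : S → ℝ | (∀ s, 0 ≤ p s) ∧ (∑ s, p s = 1) ∧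
          ∀ s, |p s - p0 s| ≤ (β : ℝ) / m},
      ∀ s : S, ∃ z : ℤ, (m : ℝ) * q s = z :=
  extreme_points_linfty_ball_rational_general m hm β p0 hp0rat
end

section
/- Let S be a nonempty finite set, m ∈ ℕ with m ≥ 1, β ∈ ℕ, and let p⁰ ∈ Δ(S) satisfy m·p⁰(s) ∈ ℕ for every s ∈ S. Set α = β/m and define U = {p ∈ Δ(S) : Σ_{s ∈ S} |p(s) − p⁰(s)| ≤ α} (the ℓ₁-ball of radius α around p⁰ intersected with the simplex). Then every extreme point q of the convex set U satisfies 2m·q(s) ∈ ℤ for every s ∈ S. -/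
/-!
An extreme point `q` cannot be moved along `eᵢ - eⱼ` when `q i, q j > 0`. For such a pair this
forces the ℓ₁-constraint to be tight (otherwise there is slack for a small exchange) and
`q i - p⁰ i`, `q j - p⁰ j` to have opposite signs (otherwise a small exchange does not change
the ℓ₁-distance).

Suppose `2m q s₀ ∉ ℤ`. As `∑ 2m q s = 2m`, some other `s₁` has `2m q s₁ ∉ ℤ`, and both
coordinates are positive, so the constraint is tight. Since `∑ (q - p⁰) = 0`, the deviations
of the sign of `q s₀ - p⁰ s₀` add up to half the ℓ₁-distance, `β / (2m)`. Every coordinate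
among them other than `s₀` is an integer multiple of `1 / (2m)`, since a second non-integral
one would have the same sign as `s₀`; hence so is `q s₀`.
-/

open Finset

theorem eq_zero_of_add_mem_of_sub_mem_of_mem_extremePoints {𝕜 E : Type*} [Ring 𝕜]
    [LinearOrder 𝕜] [IsStrictOrderedRing 𝕜] [Invertible (2 : 𝕜)] [AddCommGroup E]
    [Module 𝕜 E] {A : Set E} {x v : E} (hx : x ∈ A.extremePoints 𝕜) (hadd : x + v ∈ A)
    (hsub : x - v ∈ A) : v = 0 :=
  add_eq_left.mp (hx.2 hadd hsub (mem_openSegment_add_sub x v))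

section OrderedRing

variable {α : Type*} [CommRing α] [LinearOrder α] [IsStrictOrderedRing α]

theorem abs_add_add_abs_sub_le (a b t : α) : |a + t| + |b - t| ≤ |a| + |b| + 2 * |t| := by
  linarith [abs_add_le a t, abs_sub b t]

theorem abs_add_add_abs_sub_eq_of_mul_pos {a b t : α} (hab : 0 < a * b) (ha : |t| ≤ |a|)
    (hb : |t| ≤ |b|) : |a + t| + |b - t| = |a| + |b| := by
  have ht₁ := neg_abs_le t
  have ht₂ := le_abs_self t
  rcases mul_pos_iff.mp hab with ⟨ha0, hb0⟩ | ⟨ha0, hb0⟩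
  · rw [abs_of_pos ha0] at ha ⊢
    rw [abs_of_pos hb0] at hb ⊢
    rw [abs_of_nonneg (by linarith), abs_of_nonneg (by linarith)]
    ring
  · rw [abs_of_neg ha0] at ha ⊢
    rw [abs_of_neg hb0] at hb ⊢
    rw [abs_of_nonpos (by linarith), abs_of_nonpos (by linarith)]
    ring

theorem two_mul_sum_filter_pos_eq_sum_abs {ι : Type*} [Fintype ι] {f : ι → α}
    (hf : ∑ i, f i = 0) : 2 * ∑ i with 0 < f i, f i = ∑ i, |f i| := by
  rw [← sum_filter_add_sum_filter_not univ (fun i => 0 < f i) f] at hf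
  rw [← sum_filter_add_sum_filter_not univ (fun i => 0 < f i) (fun i => |f i|),
    sum_congr rfl fun i hi => abs_of_pos (mem_filter.mp hi).2,
    sum_congr rfl fun i hi => abs_of_nonpos (not_lt.mp (mem_filter.mp hi).2), sum_neg_distrib]
  linear_combination hf

end OrderedRing

theorem AddSubgroup.mem_of_sum_mem_of_forall_ne_mem {G ι : Type*} [AddCommGroup G]
    (H : AddSubgroup G) {s : Finset ι} {f : ι → G} {i : ι} (hi : i ∈ s)
    (hsum : ∑ j ∈ s, f j ∈ H) (hf : ∀ j ∈ s, j ≠ i → f j ∈ H) : f i ∈ H := by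
  classical
  rw [← add_sum_erase s f hi] at hsum
  refine (H.add_mem_cancel_right (H.sum_mem fun j hj => ?_)).mp hsum
  exact hf j (mem_of_mem_erase hj) (ne_of_mem_erase hj)

theorem AddSubgroup.mem_of_forall_mul_pos_mem {ι α : Type*} [Fintype ι] [CommRing α]
    [LinearOrder α] [IsStrictOrderedRing α] (H : AddSubgroup α) {f : ι → α}
    (hf : ∑ j, f j = 0) {b : α} (hb : b ∈ H) (hl1 : ∑ j, |f j| = 2 * b) {i : ι}
    (hi : f i ≠ 0) (hsame : ∀ j ≠ i, 0 < f j * f i → f j ∈ H) : f i ∈ H := by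
  wlog hpos : 0 < f i generalizing f
  · have := this (f := -f) (by simp [hf]) (by simpa using hl1) (neg_ne_zero.mpr hi)
      (fun j hj hji => H.neg_mem_iff.mpr (hsame j hj (by simpa using hji)))
      (by simpa using lt_of_le_of_ne (not_lt.mp hpos) hi)
    simpa using this
  refine H.mem_of_sum_mem_of_forall_ne_mem (mem_filter.mpr ⟨mem_univ i, hpos⟩) ?_
    fun j hj hji => hsame j hji (mul_pos (mem_filter.mp hj).2 hpos)
  have hhalf := two_mul_sum_filter_pos_eq_sum_abs hf
  rw [hl1, mul_right_inj' two_ne_zero] at hhalf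
  rwa [hhalf]

def simplexL1Ball {S : Type*} [Fintype S] (p0 : S → ℝ) (r : ℝ) : Set (S → ℝ) :=
  {p | (∀ s, 0 ≤ p s) ∧ (∑ s, p s = 1) ∧ ∑ s, |p s - p0 s| ≤ r}

namespace simplexL1Ball

variable {S : Type*} [Fintype S] [DecidableEq S] {p0 q : S → ℝ} {r : ℝ} {i j : S}

theorem add_single_sub_single_mem (hq : q ∈ simplexL1Ball p0 r) (hij : i ≠ j) {t : ℝ}
    (hi : |t| ≤ q i) (hj : |t| ≤ q j)
    (hl1 : |q i - p0 i + t| + |q j - p0 j - t|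
      ≤ |q i - p0 i| + |q j - p0 j| + (r - ∑ s, |q s - p0 s|)) :
    q + (Pi.single i t - Pi.single j t) ∈ simplexL1Ball p0 r := by
  obtain ⟨hnonneg, hsum, hdist⟩ := hq
  refine ⟨fun s => ?_, ?_, ?_⟩
  · have ht₁ := neg_abs_le t
    have ht₂ := le_abs_self t
    rcases eq_or_ne s i with rfl | hsi
    · simpa [hij] using (show 0 ≤ q s + t by linarith)
    rcases eq_or_ne s j with rfl | hsj
    · simpa [hsi] using (show 0 ≤ q s - t by linarith)
    · simpa [hsi, hsj] using hnonneg s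
  · simp [sum_add_distrib, hsum]
  · have hchange :
        ∑ s, (|(q + (Pi.single i t - Pi.single j t) : S → ℝ) s - p0 s| - |q s - p0 s|)
          = (|q i - p0 i + t| - |q i - p0 i|) + (|q j - p0 j - t| - |q j - p0 j|) := by
      rw [Fintype.sum_eq_add i j hij fun s hs => by simp [hs.1, hs.2]]
      simp only [Pi.add_apply, Pi.sub_apply, Pi.single_eq_same, Pi.single_eq_of_ne hij,
        Pi.single_eq_of_ne hij.symm, sub_zero, zero_sub]
      ring_nf
    rw [sum_sub_distrib] at hchange
    linarith

theorem notMem_extremePoints_of_exchange (hq : q ∈ simplexL1Ball p0 r) (hij : i ≠ j)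
    {ε : ℝ} (hε : 0 < ε) (hi : ε ≤ q i) (hj : ε ≤ q j)
    (hl1 : ∀ t, |t| ≤ ε → |q i - p0 i + t| + |q j - p0 j - t|
      ≤ |q i - p0 i| + |q j - p0 j| + (r - ∑ s, |q s - p0 s|)) :
    q ∉ (simplexL1Ball p0 r).extremePoints ℝ := by
  intro hext
  have hε' : |ε| = ε := abs_of_pos hε
  have hadd := add_single_sub_single_mem hq hij (hε'.trans_le hi) (hε'.trans_le hj)
    (hl1 ε hε'.le)
  have hsub := add_single_sub_single_mem hq hij (t := -ε) (by rwa [abs_neg, hε'])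
    (by rwa [abs_neg, hε']) (hl1 (-ε) (by rw [abs_neg, hε']))
  rw [Pi.single_neg, Pi.single_neg, neg_sub_neg, ← neg_sub, ← sub_eq_add_neg] at hsub
  have hzero := eq_zero_of_add_mem_of_sub_mem_of_mem_extremePoints hext hadd hsub
  simpa [hij, hε.ne'] using congrFun hzero i

theorem sum_abs_sub_eq_of_mem_extremePoints (hq : q ∈ (simplexL1Ball p0 r).extremePoints ℝ)
    (hij : i ≠ j) (hi : 0 < q i) (hj : 0 < q j) : ∑ s, |q s - p0 s| = r := by
  refine le_antisymm hq.1.2.2 (not_lt.mp fun hslack => ?_)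
  set ε := min (min (q i) (q j)) ((r - ∑ s, |q s - p0 s|) / 2)
  refine notMem_extremePoints_of_exchange hq.1 hij (ε := ε) (by positivity)
    ((min_le_left _ _).trans (min_le_left _ _)) ((min_le_left _ _).trans (min_le_right _ _))
    (fun t ht => ?_) hq
  have hεr : ε ≤ (r - ∑ s, |q s - p0 s|) / 2 := min_le_right _ _
  linarith [abs_add_add_abs_sub_le (q i - p0 i) (q j - p0 j) t]

theorem mul_nonpos_of_mem_extremePoints (hq : q ∈ (simplexL1Ball p0 r).extremePoints ℝ)
    (hij : i ≠ j) (hi : 0 < q i) (hj : 0 < q j) : (q i - p0 i) * (q j - p0 j) ≤ 0 := by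
  refine not_lt.mp fun hsame => ?_
  have hi0 : 0 < |q i - p0 i| := abs_pos.mpr (left_ne_zero_of_mul hsame.ne')
  have hj0 : 0 < |q j - p0 j| := abs_pos.mpr (right_ne_zero_of_mul hsame.ne')
  set ε := min (min (q i) (q j)) (min |q i - p0 i| |q j - p0 j|)
  refine notMem_extremePoints_of_exchange hq.1 hij (ε := ε) (by positivity)
    ((min_le_left _ _).trans (min_le_left _ _)) ((min_le_left _ _).trans (min_le_right _ _))
    (fun t ht => ?_) hq
  have hεi : ε ≤ |q i - p0 i| := (min_le_right _ _).trans (min_le_left _ _)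
  have hεj : ε ≤ |q j - p0 j| := (min_le_right _ _).trans (min_le_right _ _)
  rw [abs_add_add_abs_sub_eq_of_mul_pos hsame (ht.trans hεi) (ht.trans hεj)]
  linarith [hq.1.2.2]

theorem mul_mem_of_mem_extremePoints (hp0sum : ∑ s, p0 s = 1) (H : AddSubgroup ℝ) {c : ℝ}
    (hc : c ∈ H) (hp0 : ∀ s, c * p0 s ∈ H) (hr : c * r / 2 ∈ H)
    (hq : q ∈ (simplexL1Ball p0 r).extremePoints ℝ) (s₀ : S) : c * q s₀ ∈ H := by
  by_contra hs₀
  have hpos : ∀ s, c * q s ∉ H → 0 < q s := fun s hs =>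
    (hq.1.1 s).lt_of_ne' fun h => hs (by simp [h])
  by_cases hrest : ∀ s ≠ s₀, c * q s ∈ H
  · refine hs₀ (H.mem_of_sum_mem_of_forall_ne_mem (f := fun s => c * q s) (mem_univ s₀) ?_
      fun s _ => hrest s)
    rwa [← mul_sum, hq.1.2.1, mul_one]
  push Not at hrest
  obtain ⟨s₁, hs₁₀, hs₁⟩ := hrest
  have htight := sum_abs_sub_eq_of_mem_extremePoints hq hs₁₀ (hpos s₁ hs₁) (hpos s₀ hs₀)
  set f : S → ℝ := fun s => c * (q s - p0 s)
  have hfH : ∀ s, f s ∈ H ↔ c * q s ∈ H := fun s => by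
    rw [show c * q s = f s + c * p0 s by ring]
    exact (H.add_mem_cancel_right (hp0 s)).symm
  refine hs₀ ((hfH s₀).mp (H.mem_of_forall_mul_pos_mem (b := |c| * r / 2) ?_ ?_ ?_ ?_
    fun s hss₀ hsame => ?_))
  · simp [f, ← mul_sum, sum_sub_distrib, hq.1.2.1, hp0sum]
  · rcases abs_choice c with h | h <;> simp [h, neg_mul, neg_div, hr]
  · simp only [f, abs_mul, ← mul_sum, htight]
    ring
  · exact fun h => hs₀ ((hfH s₀).mp (h ▸ H.zero_mem))
  · by_contra hs
    have hopp := mul_nonpos_of_mem_extremePoints hq hss₀ (hpos s (mt (hfH s).mpr hs))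
      (hpos s₀ hs₀)
    have hprod : f s * f s₀ = c ^ 2 * ((q s - p0 s) * (q s₀ - p0 s₀)) := by ring
    exact hsame.not_ge (hprod ▸ mul_nonpos_of_nonneg_of_nonpos (sq_nonneg c) hopp)

end simplexL1Ball

theorem extreme_points_l1_ball_rational_general
    {S : Type*} [Fintype S]
    (m : ℕ) (hm : 1 ≤ m) (β : ℕ)
    (p0 : S → ℝ) (hp0sum : ∑ s, p0 s = 1)
    (hp0rat : ∀ s, ∃ k : ℕ, (m : ℝ) * p0 s = k) :
    ∀ q ∈ Set.extremePoints ℝ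
        {p : S → ℝ | (∀ s, 0 ≤ p s) ∧ (∑ s, p s = 1) ∧
          ∑ s, |p s - p0 s| ≤ (β : ℝ) / m},
      ∀ s : S, ∃ z : ℤ, (2 * m : ℝ) * q s = z := by
  classical
  intro q hq s
  have hZ : ∀ x : ℝ, x ∈ AddSubgroup.zmultiples 1 ↔ ∃ z : ℤ, x = z := by
    simp [AddSubgroup.mem_zmultiples_iff, eq_comm]
  rw [← hZ]
  refine simplexL1Ball.mul_mem_of_mem_extremePoints hp0sum _ ?_ (fun s => ?_) ?_ hq s
  · exact (hZ _).2 ⟨2 * m, by push_cast; ring⟩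
  · obtain ⟨k, hk⟩ := hp0rat s
    exact (hZ _).2 ⟨2 * k, by push_cast; linear_combination 2 * hk⟩
  · have hm0 : (m : ℝ) ≠ 0 := Nat.cast_ne_zero.mpr (by omega)
    exact (hZ _).2 ⟨β, by push_cast; field_simp⟩

/-- Extreme points of the `ℓ₁`-ball of radius `β/m` around a rational point `p⁰` of the
simplex, intersected with the simplex, have coordinates that are integer multiples of
`1/(2m)`. -/
theorem extreme_points_l1_ball_rational
    {S : Type*} [Fintype S] [Nonempty S]
    (m : ℕ) (hm : 1 ≤ m) (β : ℕ)
    (p0 : S → ℝ) (hp0nonneg : ∀ s, 0 ≤ p0 s) (hp0sum : ∑ s, p0 s = 1)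
    (hp0rat : ∀ s, ∃ k : ℕ, (m : ℝ) * p0 s = k) :
    ∀ q ∈ Set.extremePoints ℝ
        {p : S → ℝ | (∀ s, 0 ≤ p s) ∧ (∑ s, p s = 1) ∧
          ∑ s, |p s - p0 s| ≤ (β : ℝ) / m},
      ∀ s : S, ∃ z : ℤ, (2 * m : ℝ) * q s = z :=
  extreme_points_l1_ball_rational_general m hm β p0 hp0sum hp0rat
end
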